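/- arXiv:1303.3766 — 8 statements merged into one kernel-verified Lean document; each statement's English description precedes it below -/
import Mathlib

section
/- Let Q be a quadratic form of signature (p,q) on R^(p+q) with p ≥ q, let S be a maximal positive definite subspace and T = S^⊥ the complementary maximal negative definite subspace, with orthogonal projections π_S, π_T and positive definite forms N_S = Q|_S, N_T = -Q|_T. Then the map sending a maximal totally isotropic subspace V to the linear map f_V = π_S ∘ (π_T|_V)^(-1) is a well-defined bijection from the set of maximal totally isotropic subspaces of R^(p,q) to the set of linear isometries from (T, N_T) to (S, N_S), with inverse f ↦ V_f = { t + f(t) : t ∈ T }. -/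
open Module

noncomputable section

/-!
Because `Q = N_S ∘ π_S - N_T ∘ π_T` and `N_S` is anisotropic, a totally isotropic subspace `V`
meets `S` trivially, so `π_T` is injective on `V`, hence an isomorphism `V ≃ T` once
`dim V = dim T`. Then `V` is the graph `{t + f_V t}` of `f_V = π_S ∘ (π_T|_V)⁻¹`, and conversely
every `f : T → S` is recovered from its graph. Finally `Q (t + f t) = N_S (f t) - N_T t`, so a graph
is totally isotropic exactly when `f` is an isometry.
-/

namespace Submodule

variable {K E : Type*} [Field K] [AddCommGroup E] [Module K E] {S T : Submodule K E}

/-- The subspace `V_f = {t + f t | t ∈ T}`. -/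
def linearGraph (f : T →ₗ[K] S) : Submodule K E :=
  LinearMap.range (T.subtype + S.subtype ∘ₗ f)

theorem mem_linearGraph_of_mem (f : T →ₗ[K] S) (t : T) : (t : E) + f t ∈ linearGraph f :=
  ⟨t, rfl⟩

variable (h : IsCompl S T)
include h

theorem projectionOnto_symm_coe_add_coe (t : T) (s : S) :
    T.projectionOnto S h.symm ((t : E) + s) = t := by
  rw [map_add, projectionOnto_apply_left, projectionOnto_apply_right, add_zero]

theorem projectionOnto_coe_add_coe (t : T) (s : S) : S.projectionOnto T h ((t : E) + s) = s := by
  rw [map_add, projectionOnto_apply_left, projectionOnto_apply_right, zero_add]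

theorem finrank_linearGraph (f : T →ₗ[K] S) : finrank K (linearGraph f) = finrank K T := by
  refine LinearMap.finrank_range_of_inj fun a b (hab : (a : E) + f a = b + f b) => ?_
  simpa only [projectionOnto_symm_coe_add_coe h] using
    congrArg (T.projectionOnto S h.symm) hab

/-- The map `f_V = π_S ∘ (π_T|_V)⁻¹`. -/
def graphFun (V : Submodule K E)
    (hV : Function.Bijective (T.projectionOnto S h.symm ∘ₗ V.subtype)) : T →ₗ[K] S :=
  S.projectionOnto T h ∘ₗ V.subtype ∘ₗ (LinearEquiv.ofBijective _ hV).symm.toLinearMap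

variable {V : Submodule K E} (hV : Function.Bijective (T.projectionOnto S h.symm ∘ₗ V.subtype))

theorem graphFun_apply_projectionOnto {v : E} (hv : v ∈ V) :
    graphFun h V hV (T.projectionOnto S h.symm v) = S.projectionOnto T h v := by
  have hsymm : (LinearEquiv.ofBijective _ hV).symm (T.projectionOnto S h.symm v) = ⟨v, hv⟩ :=
    (LinearEquiv.ofBijective _ hV).symm_apply_apply ⟨v, hv⟩
  simp only [graphFun, LinearMap.comp_apply, LinearEquiv.coe_coe, hsymm, subtype_apply]

theorem linearGraph_graphFun : linearGraph (graphFun h V hV) = V := by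
  ext v
  constructor
  · rintro ⟨t, rfl⟩
    obtain ⟨⟨w, hw⟩, rfl⟩ := hV.2 t
    change (T.projectionOnto S h.symm w : E) + graphFun h V hV (T.projectionOnto S h.symm w) ∈ V
    rw [graphFun_apply_projectionOnto h hV hw, add_comm]
    simpa only [← projection_apply, projection_add_projection_eq_self] using hw
  · intro hv
    have hdecomp := projection_add_projection_eq_self h.symm v
    rw [projection_apply, projection_apply, ← graphFun_apply_projectionOnto h hV hv] at hdecomp
    exact hdecomp ▸ mem_linearGraph_of_mem _ _

theorem graphFun_linearGraph (f : T →ₗ[K] S)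
    (hf : Function.Bijective (T.projectionOnto S h.symm ∘ₗ (linearGraph f).subtype)) :
    graphFun h (linearGraph f) hf = f := by
  ext t
  simpa only [projectionOnto_symm_coe_add_coe h, projectionOnto_coe_add_coe h] using
    congrArg Subtype.val (graphFun_apply_projectionOnto h hf (mem_linearGraph_of_mem f t))

variable (Q : QuadraticForm K E)

theorem injective_projectionOnto_of_isotropic (hS : ∀ x ∈ S, Q x = 0 → x = 0)
    (hVQ : ∀ x ∈ V, Q x = 0) : Function.Injective (T.projectionOnto S h.symm ∘ₗ V.subtype) := by
  refine (injective_iff_map_eq_zero _).2 fun ⟨v, hv⟩ hv0 => ?_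
  have hvS : v ∈ S := (projectionOnto_apply_eq_zero_iff h.symm).1 hv0
  exact Subtype.ext (hS v hvS (hVQ v hv))

theorem bijective_projectionOnto_of_isotropic [FiniteDimensional K E]
    (hS : ∀ x ∈ S, Q x = 0 → x = 0) (hVQ : ∀ x ∈ V, Q x = 0) (hVT : finrank K V = finrank K T) :
    Function.Bijective (T.projectionOnto S h.symm ∘ₗ V.subtype) := by
  have hinj := injective_projectionOnto_of_isotropic h Q hS hVQ
  exact ⟨hinj, (LinearMap.injective_iff_surjective_of_finrank_eq_finrank hVT).1 hinj⟩

theorem isotropic_linearGraph_iff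
    (hQ : ∀ x, Q x = Q (S.projectionOnto T h x : E) + Q (T.projectionOnto S h.symm x : E))
    (f : T →ₗ[K] S) : (∀ x ∈ linearGraph f, Q x = 0) ↔ ∀ t : T, Q (f t : E) = -Q t := by
  have hQgraph (t : T) : Q ((t : E) + f t) = Q (f t : E) + Q t := by
    rw [hQ, projectionOnto_coe_add_coe h, projectionOnto_symm_coe_add_coe h]
  constructor
  · intro hiso t
    linear_combination (hQgraph t).symm.trans (hiso _ (mem_linearGraph_of_mem f t))
  · rintro hf _ ⟨t, rfl⟩
    change Q ((t : E) + f t) = 0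
    rw [hQgraph, hf, neg_add_cancel]

end Submodule

theorem mtis_isometry_bijection_general (p q : ℕ)
    (Q : QuadraticForm ℝ (Fin (p + q) → ℝ))
    (S T : Submodule ℝ (Fin (p + q) → ℝ))
    (hST : IsCompl S T)
    (hTdim : finrank ℝ T = q)
    (hSpos : ∀ x ∈ S, x ≠ 0 → 0 < Q x)
    (hQdec : ∀ x, Q x = Q ((S.linearProjOfIsCompl T hST x : Fin (p + q) → ℝ))
        + Q ((T.linearProjOfIsCompl S hST.symm x : Fin (p + q) → ℝ))) :
    ∃ Φ : {V : Submodule ℝ (Fin (p + q) → ℝ) // (∀ x ∈ V, Q x = 0) ∧ finrank ℝ V = q} ≃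
          {f : T →ₗ[ℝ] S // ∀ t : T, Q ((f t : Fin (p + q) → ℝ)) = - Q ((t : Fin (p + q) → ℝ))},
      (∀ V : {V : Submodule ℝ (Fin (p + q) → ℝ) // (∀ x ∈ V, Q x = 0) ∧ finrank ℝ V = q},
        ∀ v ∈ V.1, ((Φ V).1 (T.linearProjOfIsCompl S hST.symm v) : Fin (p + q) → ℝ)
          = (S.linearProjOfIsCompl T hST v : Fin (p + q) → ℝ)) ∧
      (∀ f : {f : T →ₗ[ℝ] S // ∀ t : T, Q ((f t : Fin (p + q) → ℝ)) = - Q ((t : Fin (p + q) → ℝ))},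
        (Φ.symm f).1 = LinearMap.range (T.subtype + S.subtype ∘ₗ f.1)) := by
  have hS (x) (hx : x ∈ S) (hQx : Q x = 0) : x = 0 := by
    by_contra hx0
    exact (hSpos x hx hx0).ne' hQx
  have hbij (V : Submodule ℝ (Fin (p + q) → ℝ)) (hV : (∀ x ∈ V, Q x = 0) ∧ finrank ℝ V = q) :=
    Submodule.bijective_projectionOnto_of_isotropic hST Q hS hV.1 (hV.2.trans hTdim.symm)
  have hiso := Submodule.isotropic_linearGraph_iff hST Q hQdec
  let Φ : {V : Submodule ℝ (Fin (p + q) → ℝ) // (∀ x ∈ V, Q x = 0) ∧ finrank ℝ V = q} ≃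
      {f : T →ₗ[ℝ] S // ∀ t : T, Q ((f t : Fin (p + q) → ℝ)) = - Q ((t : Fin (p + q) → ℝ))} :=
    { toFun V := ⟨Submodule.graphFun hST V.1 (hbij V.1 V.2),
        (hiso _).1 ((Submodule.linearGraph_graphFun hST _).symm ▸ V.2.1)⟩
      invFun f := ⟨Submodule.linearGraph f.1, (hiso f.1).2 f.2,
        (Submodule.finrank_linearGraph hST f.1).trans hTdim⟩
      left_inv V := Subtype.ext (Submodule.linearGraph_graphFun hST _)
      right_inv f := Subtype.ext (Submodule.graphFun_linearGraph hST f.1 _) }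
  exact ⟨Φ, fun V v hv => congrArg Subtype.val
    (Submodule.graphFun_apply_projectionOnto hST (hbij V.1 V.2) hv), fun f => rfl⟩

/-- The map `V ↦ f_V = π_S ∘ (π_T|_V)⁻¹` is a well-defined bijection from the
set of maximal totally isotropic subspaces of `ℝ^{p,q}` to the set of linear isometries from
`(T, N_T)` to `(S, N_S)`, with inverse `f ↦ V_f = { t + f t : t ∈ T }`. -/
theorem mtis_isometry_bijection (p q : ℕ) (hpq : q ≤ p)
    (Q : QuadraticForm ℝ (Fin (p + q) → ℝ))
    (S T : Submodule ℝ (Fin (p + q) → ℝ))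
    (hST : IsCompl S T)
    (hSdim : finrank ℝ S = p) (hTdim : finrank ℝ T = q)
    (hSpos : ∀ x ∈ S, x ≠ 0 → 0 < Q x)
    (hTneg : ∀ x ∈ T, x ≠ 0 → Q x < 0)
    (hQdec : ∀ x, Q x = Q ((S.linearProjOfIsCompl T hST x : Fin (p + q) → ℝ))
        + Q ((T.linearProjOfIsCompl S hST.symm x : Fin (p + q) → ℝ))) :
    ∃ Φ : {V : Submodule ℝ (Fin (p + q) → ℝ) // (∀ x ∈ V, Q x = 0) ∧ finrank ℝ V = q} ≃
          {f : T →ₗ[ℝ] S // ∀ t : T, Q ((f t : Fin (p + q) → ℝ)) = - Q ((t : Fin (p + q) → ℝ))},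
      (∀ V : {V : Submodule ℝ (Fin (p + q) → ℝ) // (∀ x ∈ V, Q x = 0) ∧ finrank ℝ V = q},
        ∀ v ∈ V.1, ((Φ V).1 (T.linearProjOfIsCompl S hST.symm v) : Fin (p + q) → ℝ)
          = (S.linearProjOfIsCompl T hST v : Fin (p + q) → ℝ)) ∧
      (∀ f : {f : T →ₗ[ℝ] S // ∀ t : T, Q ((f t : Fin (p + q) → ℝ)) = - Q ((t : Fin (p + q) → ℝ))},
        (Φ.symm f).1 = LinearMap.range (T.subtype + S.subtype ∘ₗ f.1)) :=
  mtis_isometry_bijection_general p q Q S T hST hTdim hSpos hQdec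
end
end

section
/- With the notation of the MTIS–isometry bijection, two maximal totally isotropic subspaces V₁ and V₂ of R^(p,q) are transversal (i.e., V₁ ∩ V₂ = {0}) if and only if the difference f_{V₁} − f_{V₂} of the corresponding isometries T → S is injective. -/
open Module

noncomputable section

/-- Two maximal totally isotropic subspaces `V₁`, `V₂` of `ℝ^{p,q}` are
transversal iff the difference `f_{V₁} - f_{V₂}` of the corresponding isometries `T → S`
is injective.  Here `f_{Vᵢ}` is characterized by `f_{Vᵢ} (π_T v) = π_S v` for `v ∈ Vᵢ`. -/
theorem mtis_transversal_iff_difference_injective (p q : ℕ) (hpq : q ≤ p)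
    (Q : QuadraticForm ℝ (Fin (p + q) → ℝ))
    (S T : Submodule ℝ (Fin (p + q) → ℝ))
    (hST : IsCompl S T)
    (hSdim : finrank ℝ S = p) (hTdim : finrank ℝ T = q)
    (hSpos : ∀ x ∈ S, x ≠ 0 → 0 < Q x)
    (hTneg : ∀ x ∈ T, x ≠ 0 → Q x < 0)
    (hQdec : ∀ x, Q x = Q ((S.linearProjOfIsCompl T hST x : Fin (p + q) → ℝ))
        + Q ((T.linearProjOfIsCompl S hST.symm x : Fin (p + q) → ℝ)))
    (V₁ V₂ : Submodule ℝ (Fin (p + q) → ℝ))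
    (hV₁iso : ∀ x ∈ V₁, Q x = 0) (hV₁dim : finrank ℝ V₁ = q)
    (hV₂iso : ∀ x ∈ V₂, Q x = 0) (hV₂dim : finrank ℝ V₂ = q)
    (f₁ f₂ : T →ₗ[ℝ] S)
    (hf₁iso : ∀ t : T, Q ((f₁ t : Fin (p + q) → ℝ)) = - Q ((t : Fin (p + q) → ℝ)))
    (hf₂iso : ∀ t : T, Q ((f₂ t : Fin (p + q) → ℝ)) = - Q ((t : Fin (p + q) → ℝ)))
    (hf₁ : ∀ v ∈ V₁, ((f₁ (T.linearProjOfIsCompl S hST.symm v) : Fin (p + q) → ℝ))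
        = (S.linearProjOfIsCompl T hST v : Fin (p + q) → ℝ))
    (hf₂ : ∀ v ∈ V₂, ((f₂ (T.linearProjOfIsCompl S hST.symm v) : Fin (p + q) → ℝ))
        = (S.linearProjOfIsCompl T hST v : Fin (p + q) → ℝ)) :
    V₁ ⊓ V₂ = ⊥ ↔ Function.Injective ⇑(f₁ - f₂) := by
  set πS := S.linearProjOfIsCompl T hST with hπS
  set πT := T.linearProjOfIsCompl S hST.symm with hπT
  -- If v ∈ Vᵢ and πT v = 0 then v = 0
  have key : ∀ (V : Submodule ℝ (Fin (p + q) → ℝ)), (∀ x ∈ V, Q x = 0) →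
      ∀ v ∈ V, πT v = 0 → v = 0 := by
    intro V hViso v hv hvT
    have hvS : v ∈ S := (Submodule.linearProjOfIsCompl_apply_eq_zero_iff hST.symm).mp hvT
    by_contra hne
    exact absurd (hViso v hv) (ne_of_gt (hSpos v hvS hne))
  -- πT restricted to Vᵢ is surjective
  have hsurj : ∀ (V : Submodule ℝ (Fin (p + q) → ℝ)), (∀ x ∈ V, Q x = 0) →
      finrank ℝ V = q → Function.Surjective (πT.comp V.subtype) := by
    intro V hViso hVdim
    have hinj : Function.Injective (πT.comp V.subtype) := by
      rw [← LinearMap.ker_eq_bot, Submodule.eq_bot_iff]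
      rintro ⟨v, hv⟩ h
      simp only [LinearMap.mem_ker, LinearMap.comp_apply, Submodule.subtype_apply] at h
      exact Subtype.ext (key V hViso v hv h)
    exact (LinearMap.injective_iff_surjective_of_finrank_eq_finrank
      (by rw [hVdim, hTdim])).mp hinj
  constructor
  · intro hVV
    rw [← LinearMap.ker_eq_bot, Submodule.eq_bot_iff]
    intro t ht
    rw [LinearMap.mem_ker] at ht
    obtain ⟨⟨v₁, hv₁⟩, hvt₁⟩ := hsurj V₁ hV₁iso hV₁dim t
    obtain ⟨⟨v₂, hv₂⟩, hvt₂⟩ := hsurj V₂ hV₂iso hV₂dim t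
    simp only [LinearMap.comp_apply, Submodule.subtype_apply] at hvt₁ hvt₂
    have heq : (f₁ t : Fin (p + q) → ℝ) = f₂ t := by
      rw [LinearMap.sub_apply, sub_eq_zero] at ht
      exact congrArg Subtype.val ht
    have h1 : (f₁ t : Fin (p + q) → ℝ) = πS v₁ := by rw [← hvt₁]; exact hf₁ v₁ hv₁
    have h2 : (f₂ t : Fin (p + q) → ℝ) = πS v₂ := by rw [← hvt₂]; exact hf₂ v₂ hv₂
    have hv12 : v₁ = v₂ := by
      have e1 : v₁ = (πS v₁ : Fin (p + q) → ℝ) + t := by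
        rw [← hvt₁]; exact (Submodule.projection_add_projection_eq_self hST v₁).symm
      have e2 : v₂ = (πS v₂ : Fin (p + q) → ℝ) + t := by
        rw [← hvt₂]; exact (Submodule.projection_add_projection_eq_self hST v₂).symm
      rw [e1, e2, ← h1, ← h2, heq]
    have hmem : v₁ ∈ V₁ ⊓ V₂ := ⟨hv₁, hv12 ▸ hv₂⟩
    rw [hVV, Submodule.mem_bot] at hmem
    rw [hmem, map_zero] at hvt₁
    exact hvt₁.symm
  · intro hinj
    rw [Submodule.eq_bot_iff]
    rintro v ⟨hv1, hv2⟩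
    have h1 := hf₁ v hv1
    have h2 := hf₂ v hv2
    have hz : (f₁ - f₂) (πT v) = 0 := by
      apply Subtype.ext
      simp only [LinearMap.sub_apply, Submodule.coe_sub, ZeroMemClass.coe_zero]
      rw [h1, h2, sub_self]
    have hT0 : πT v = 0 := hinj (by rw [hz, map_zero])
    exact key V₁ hV₁iso v hv1 hT0
end
end

section
/- Let p be an odd positive integer. Then among any three orthogonal linear maps f₁, f₂, f₃ ∈ O(p) (orthogonal maps from R^p to R^p), there exist two indices i ≠ j such that f_i − f_j is not injective. Consequently, in R^(p,p) with p odd one cannot find three pairwise transversal maximal totally isotropic subspaces. -/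
open Module

/-! If `Aᵀ H A = Bᵀ H B`, then `Aᵀ H (A - B) = -(A - B)ᵀ H B`; taking determinants in odd
dimension, invertibility of `A - B` forces `det A = -det B`. For three such matrices with pairwise
invertible differences this gives `det A₀ = -det A₁ = det A₂ = -det A₀`, so `det A₀ = 0`, which is
absurd. Orthogonal maps are the case `H = 1`. In `ℝ^(p,p) = S ⊕ T`, a maximal totally isotropic
subspace misses the negative definite part `T`, hence is the graph of a map `S → T` that is an
isometry from `Q|S` to `-Q|T`; transversal subspaces are graphs of maps with injective
difference. -/

namespace Matrix

variable {R n : Type*} [CommRing R] [Fintype n] [DecidableEq n]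

theorem det_eq_neg_det_of_transpose_mul_mul_eq [NoZeroDivisors R] (hn : Odd (Fintype.card n))
    {H A B : Matrix n n R} (hH : H.det ≠ 0) (hAB : Aᵀ * H * A = Bᵀ * H * B)
    (hsub : (A - B).det ≠ 0) : A.det = -B.det := by
  have key : Aᵀ * H * (A - B) = -((A - B)ᵀ * H * B) := by
    simp only [transpose_sub, mul_sub, sub_mul, hAB]
    abel
  have hdet := congrArg det key
  rw [det_neg, hn.neg_one_pow, det_mul, det_mul, det_mul, det_mul, det_transpose,
    det_transpose] at hdet
  have : (A.det + B.det) * (H.det * (A - B).det) = 0 := by linear_combination hdet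
  exact eq_neg_of_add_eq_zero_left
    ((mul_eq_zero.mp this).resolve_right (mul_ne_zero hH hsub))

theorem not_det_sub_ne_zero_of_transpose_mul_mul_eq [IsDomain R] [NeZero (2 : R)]
    (hn : Odd (Fintype.card n)) {G H A₀ A₁ A₂ : Matrix n n R} (hG : G.det ≠ 0)
    (h₀ : A₀ᵀ * H * A₀ = G) (h₁ : A₁ᵀ * H * A₁ = G) (h₂ : A₂ᵀ * H * A₂ = G) :
    ¬ ((A₀ - A₁).det ≠ 0 ∧ (A₀ - A₂).det ≠ 0 ∧ (A₁ - A₂).det ≠ 0) := by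
  rintro ⟨h₀₁, h₀₂, h₁₂⟩
  have hGdet : G.det = A₀.det ^ 2 * H.det := by
    rw [← h₀, det_mul, det_mul, det_transpose]; ring
  have hH : H.det ≠ 0 := right_ne_zero_of_mul (hGdet ▸ hG)
  have hA₀ : A₀.det ≠ 0 := pow_ne_zero_iff two_ne_zero |>.mp (left_ne_zero_of_mul (hGdet ▸ hG))
  have e₀₁ := det_eq_neg_det_of_transpose_mul_mul_eq hn hH (h₀.trans h₁.symm) h₀₁
  have e₀₂ := det_eq_neg_det_of_transpose_mul_mul_eq hn hH (h₀.trans h₂.symm) h₀₂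
  have e₁₂ := det_eq_neg_det_of_transpose_mul_mul_eq hn hH (h₁.trans h₂.symm) h₁₂
  have : (2 : R) * A₀.det = 0 := by linear_combination e₀₁ - e₁₂ + e₀₂
  exact hA₀ ((mul_eq_zero.mp this).resolve_left two_ne_zero)

end Matrix

section LinearMap

variable {K M N : Type*} [Field K] [AddCommGroup M] [Module K M] [AddCommGroup N] [Module K N]

theorem LinearMap.det_toMatrix_ne_zero_of_injective [FiniteDimensional K N]
    {ι : Type*} [Fintype ι] [DecidableEq ι]
    (bM : Basis ι K M) (bN : Basis ι K N) {f : M →ₗ[K] N} (hf : Function.Injective f) :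
    (LinearMap.toMatrix bM bN f).det ≠ 0 :=
  (LinearEquiv.ofInjectiveOfFinrankEq f hf
    ((finrank_eq_card_basis bM).trans (finrank_eq_card_basis bN).symm)).isUnit_det bM bN |>.ne_zero

open Matrix in
theorem LinearMap.BilinForm.not_injective_sub_of_compl₁₂_eq [NeZero (2 : K)]
    [FiniteDimensional K M] [FiniteDimensional K N]
    (hdim : finrank K N = finrank K M) (hodd : Odd (finrank K M))
    {βM : LinearMap.BilinForm K M} {βN : LinearMap.BilinForm K N} (hβM : βM.SeparatingLeft)
    {g₀ g₁ g₂ : M →ₗ[K] N} (h₀ : βN.compl₁₂ g₀ g₀ = βM) (h₁ : βN.compl₁₂ g₁ g₁ = βM)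
    (h₂ : βN.compl₁₂ g₂ g₂ = βM) :
    ¬ (Function.Injective (g₀ - g₁) ∧ Function.Injective (g₀ - g₂) ∧
      Function.Injective (g₁ - g₂)) := by
  let bM := finBasis K M
  let bN := (finBasis K N).reindex (finCongr hdim)
  have hmatrix : ∀ g : M →ₗ[K] N, βN.compl₁₂ g g = βM →
      (LinearMap.toMatrix bM bN g)ᵀ * toMatrix₂ bN bN βN * LinearMap.toMatrix bM bN g =
        toMatrix₂ bM bM βM := by
    rintro g rfl
    exact (toMatrix₂_compl₁₂ bN bN bM bM βN g g).symm
  have hodd' : Odd (Fintype.card (Fin (finrank K M))) := by rwa [Fintype.card_fin]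
  rintro ⟨i₀₁, i₀₂, i₁₂⟩
  refine Matrix.not_det_sub_ne_zero_of_transpose_mul_mul_eq hodd'
    ((separatingLeft_iff_det_ne_zero bM).mp hβM) (hmatrix _ h₀) (hmatrix _ h₁) (hmatrix _ h₂) ?_
  simp only [← map_sub]
  exact ⟨det_toMatrix_ne_zero_of_injective bM bN i₀₁, det_toMatrix_ne_zero_of_injective bM bN i₀₂,
    det_toMatrix_ne_zero_of_injective bM bN i₁₂⟩

end LinearMap

theorem LinearIsometryEquiv.exists_ne_not_injective_sub_of_odd {E : Type*}
    [NormedAddCommGroup E] [InnerProductSpace ℝ E] [FiniteDimensional ℝ E]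
    (hodd : Odd (finrank ℝ E)) (f : Fin 3 → E ≃ₗᵢ[ℝ] E) :
    ∃ i j : Fin 3, i ≠ j ∧
      ¬ Function.Injective ⇑(((f i).toLinearEquiv : E →ₗ[ℝ] E) - (f j).toLinearEquiv) := by
  have hinner : (innerₗ E).SeparatingLeft := fun x hx => inner_self_eq_zero.mp (hx x)
  have hisom : ∀ i, (innerₗ E).compl₁₂ ((f i).toLinearEquiv : E →ₗ[ℝ] E) (f i).toLinearEquiv =
      innerₗ E := fun i => by ext x y; simp
  by_contra! hinj
  exact LinearMap.BilinForm.not_injective_sub_of_compl₁₂_eq rfl hodd hinner (hisom 0) (hisom 1)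
    (hisom 2) ⟨hinj 0 1 (by decide), hinj 0 2 (by decide), hinj 1 2 (by decide)⟩

namespace Submodule

variable {K E : Type*} [Field K] [AddCommGroup E] [Module K E] {S T V : Submodule K E}

theorem exists_linearMap_add_mem_of_inf_eq_bot [FiniteDimensional K E]
    (hST : IsCompl S T) (hVT : V ⊓ T = ⊥) (hVdim : finrank K V = finrank K S) :
    ∃ g : S →ₗ[K] T, ∀ s : S, (s : E) + g s ∈ V := by
  let φ : V →ₗ[K] S := S.projectionOnto T hST ∘ₗ V.subtype
  have hφ : Function.Injective φ := by
    refine (injective_iff_map_eq_zero φ).mpr fun v hv => ?_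
    have hvVT : (v : E) ∈ V ⊓ T := ⟨v.2, (projectionOnto_apply_eq_zero_iff hST).mp hv⟩
    rw [hVT, mem_bot] at hvVT
    exact Subtype.ext hvVT
  let e := LinearEquiv.ofInjectiveOfFinrankEq φ hφ hVdim
  refine ⟨T.projectionOnto S hST.symm ∘ₗ V.subtype ∘ₗ e.symm.toLinearMap, fun s => ?_⟩
  have hs : S.projectionOnto T hST (e.symm s) = s := e.apply_symm_apply s
  have hsum : (s : E) + T.projectionOnto S hST.symm (e.symm s) = e.symm s := by
    simpa only [← coe_projectionOnto_apply, hs] using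
      projection_add_projection_eq_self hST (e.symm s : E)
  simpa only [LinearMap.comp_apply, LinearEquiv.coe_coe, subtype_apply, hsum]
    using (e.symm s).2

theorem injective_sub_of_add_mem_of_inf_eq_bot (hST : Disjoint S T)
    {W : Submodule K E} (hVW : V ⊓ W = ⊥) {g h : S →ₗ[K] T}
    (hg : ∀ s : S, (s : E) + g s ∈ V) (hh : ∀ s : S, (s : E) + h s ∈ W) :
    Function.Injective (g - h) := by
  refine (injective_iff_map_eq_zero _).mpr fun s hs => ?_
  have hgh : g s = h s := sub_eq_zero.mp hs
  have hzero : (s : E) + g s ∈ V ⊓ W := ⟨hg s, hgh ▸ hh s⟩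
  rw [hVW, mem_bot] at hzero
  have hsT : (s : E) ∈ T := by
    rw [eq_neg_of_add_eq_zero_left hzero]; exact neg_mem (g s).2
  simpa using (disjoint_def.mp hST) s s.2 hsT

end Submodule

theorem QuadraticForm.exists_graph_of_isotropic {E : Type*} [AddCommGroup E] [Module ℝ E]
    [FiniteDimensional ℝ E] {S T V : Submodule ℝ E} (Q : QuadraticForm ℝ E)
    (hST : IsCompl S T) (hTneg : ∀ x ∈ T, x ≠ 0 → Q x < 0)
    (hQdec : ∀ x, Q x = Q (S.projectionOnto T hST x) + Q (T.projectionOnto S hST.symm x))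
    (hV : ∀ x ∈ V, Q x = 0) (hVdim : finrank ℝ V = finrank ℝ S) :
    ∃ g : S →ₗ[ℝ] T, (∀ s : S, (s : E) + g s ∈ V) ∧
      (QuadraticMap.associated ((-Q).comp T.subtype)).compl₁₂ g g =
        QuadraticMap.associated (Q.comp S.subtype) := by
  have hVT : V ⊓ T = ⊥ := by
    refine eq_bot_iff.mpr fun x hx => ?_
    by_contra hx0
    exact (hTneg x hx.2 hx0).ne (hV x hx.1)
  obtain ⟨g, hg⟩ := Submodule.exists_linearMap_add_mem_of_inf_eq_bot hST hVT hVdim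
  refine ⟨g, hg, ?_⟩
  have hQg : ((-Q).comp T.subtype).comp g = Q.comp S.subtype := by
    ext s
    have h := hQdec (s + g s)
    simp only [map_add, Submodule.projectionOnto_apply_left, Submodule.projectionOnto_apply_right,
      add_zero, zero_add, hV _ (hg s)] at h
    simp only [QuadraticMap.comp_apply, Submodule.subtype_apply]
    rw [neg_apply]
    linarith
  rw [← QuadraticMap.associated_comp, hQg]

theorem no_three_transversal_mtis_odd_general (p : ℕ) (hp : Odd p)
    (Q : QuadraticForm ℝ (Fin (p + p) → ℝ))
    (S T : Submodule ℝ (Fin (p + p) → ℝ))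
    (hST : IsCompl S T)
    (hSdim : finrank ℝ S = p) (hTdim : finrank ℝ T = p)
    (hSpos : ∀ x ∈ S, x ≠ 0 → 0 < Q x)
    (hTneg : ∀ x ∈ T, x ≠ 0 → Q x < 0)
    (hQdec : ∀ x, Q x = Q ((S.linearProjOfIsCompl T hST x : Fin (p + p) → ℝ))
        + Q ((T.linearProjOfIsCompl S hST.symm x : Fin (p + p) → ℝ))) :
    (∀ f : Fin 3 → (EuclideanSpace ℝ (Fin p) ≃ₗᵢ[ℝ] EuclideanSpace ℝ (Fin p)),
      ∃ i j : Fin 3, i ≠ j ∧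
        ¬ Function.Injective
          ⇑(((f i).toLinearEquiv : EuclideanSpace ℝ (Fin p) →ₗ[ℝ] EuclideanSpace ℝ (Fin p))
            - ((f j).toLinearEquiv : EuclideanSpace ℝ (Fin p) →ₗ[ℝ] EuclideanSpace ℝ (Fin p)))) ∧
    ¬ ∃ V₁ V₂ V₃ : Submodule ℝ (Fin (p + p) → ℝ),
        ((∀ x ∈ V₁, Q x = 0) ∧ finrank ℝ V₁ = p) ∧
        ((∀ x ∈ V₂, Q x = 0) ∧ finrank ℝ V₂ = p) ∧
        ((∀ x ∈ V₃, Q x = 0) ∧ finrank ℝ V₃ = p) ∧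
        V₁ ⊓ V₂ = ⊥ ∧ V₁ ⊓ V₃ = ⊥ ∧ V₂ ⊓ V₃ = ⊥ := by
  refine ⟨LinearIsometryEquiv.exists_ne_not_injective_sub_of_odd
    (finrank_euclideanSpace_fin (𝕜 := ℝ) ▸ hp), ?_⟩
  rintro ⟨V₁, V₂, V₃, ⟨hV₁, hd₁⟩, ⟨hV₂, hd₂⟩, ⟨hV₃, hd₃⟩, h₁₂, h₁₃, h₂₃⟩
  have hSanis : (Q.comp S.subtype).Anisotropic := fun x hx => by
    by_contra hx0
    exact (hSpos x x.2 (by simpa using hx0)).ne' hx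
  obtain ⟨g₁, hg₁V, hg₁⟩ := Q.exists_graph_of_isotropic hST hTneg hQdec hV₁ (hd₁.trans hSdim.symm)
  obtain ⟨g₂, hg₂V, hg₂⟩ := Q.exists_graph_of_isotropic hST hTneg hQdec hV₂ (hd₂.trans hSdim.symm)
  obtain ⟨g₃, hg₃V, hg₃⟩ := Q.exists_graph_of_isotropic hST hTneg hQdec hV₃ (hd₃.trans hSdim.symm)
  exact LinearMap.BilinForm.not_injective_sub_of_compl₁₂_eq (hTdim.trans hSdim.symm)
    (hSdim.symm ▸ hp) (QuadraticMap.separatingLeft_of_anisotropic _ hSanis) hg₁ hg₂ hg₃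
    ⟨Submodule.injective_sub_of_add_mem_of_inf_eq_bot hST.disjoint h₁₂ hg₁V hg₂V,
      Submodule.injective_sub_of_add_mem_of_inf_eq_bot hST.disjoint h₁₃ hg₁V hg₃V,
      Submodule.injective_sub_of_add_mem_of_inf_eq_bot hST.disjoint h₂₃ hg₂V hg₃V⟩

/-- For odd `p`, among any three orthogonal maps of `ℝ^p` two have a
non-injective difference; consequently, in `ℝ^{p,p}` (`p` odd) one cannot find three
pairwise transversal maximal totally isotropic subspaces. -/
theorem no_three_transversal_mtis_odd (p : ℕ) (hp : Odd p) (hp0 : 0 < p)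
    (Q : QuadraticForm ℝ (Fin (p + p) → ℝ))
    (S T : Submodule ℝ (Fin (p + p) → ℝ))
    (hST : IsCompl S T)
    (hSdim : finrank ℝ S = p) (hTdim : finrank ℝ T = p)
    (hSpos : ∀ x ∈ S, x ≠ 0 → 0 < Q x)
    (hTneg : ∀ x ∈ T, x ≠ 0 → Q x < 0)
    (hQdec : ∀ x, Q x = Q ((S.linearProjOfIsCompl T hST x : Fin (p + p) → ℝ))
        + Q ((T.linearProjOfIsCompl S hST.symm x : Fin (p + p) → ℝ))) :
    (∀ f : Fin 3 → (EuclideanSpace ℝ (Fin p) ≃ₗᵢ[ℝ] EuclideanSpace ℝ (Fin p)),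
      ∃ i j : Fin 3, i ≠ j ∧
        ¬ Function.Injective
          ⇑(((f i).toLinearEquiv : EuclideanSpace ℝ (Fin p) →ₗ[ℝ] EuclideanSpace ℝ (Fin p))
            - ((f j).toLinearEquiv : EuclideanSpace ℝ (Fin p) →ₗ[ℝ] EuclideanSpace ℝ (Fin p)))) ∧
    ¬ ∃ V₁ V₂ V₃ : Submodule ℝ (Fin (p + p) → ℝ),
        ((∀ x ∈ V₁, Q x = 0) ∧ finrank ℝ V₁ = p) ∧
        ((∀ x ∈ V₂, Q x = 0) ∧ finrank ℝ V₂ = p) ∧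
        ((∀ x ∈ V₃, Q x = 0) ∧ finrank ℝ V₃ = p) ∧
        V₁ ⊓ V₂ = ⊥ ∧ V₁ ⊓ V₃ = ⊥ ∧ V₂ ⊓ V₃ = ⊥ :=
  no_three_transversal_mtis_odd_general p hp Q S T hST hSdim hTdim hSpos hTneg hQdec
end

section
/- Every pseudohyperbolic map g ∈ O(d+1,d) has determinant 1, i.e., lies in SO(d+1,d). -/
open Module Filter Topology

noncomputable section

/-- The stable subspace of a linear automorphism: vectors whose forward orbit tends to `0`.
For the maps considered here this is the sum of the generalized eigenspaces for eigenvalues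
of modulus `< 1`. -/
def stableSet {n : ℕ} (g : (Fin n → ℝ) ≃ₗ[ℝ] (Fin n → ℝ)) : Submodule ℝ (Fin n → ℝ) where
  carrier := {x | Tendsto (fun k : ℕ => (g ^ k) x) atTop (nhds 0)}
  add_mem' := by
    intro a b ha hb
    have ha' : Tendsto (fun k : ℕ => (g ^ k) a) atTop (nhds 0) := ha
    have hb' : Tendsto (fun k : ℕ => (g ^ k) b) atTop (nhds 0) := hb
    have := ha'.add hb'
    simpa using this
  zero_mem' := by
    simp only [Set.mem_setOf_eq, map_zero]
    exact tendsto_const_nhds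
  smul_mem' := by
    intro c a ha
    have ha' : Tendsto (fun k : ℕ => (g ^ k) a) atTop (nhds 0) := ha
    have := ha'.const_smul c
    simpa using this

/-- The unstable subspace: the stable subspace of the inverse. -/
def unstableSet {n : ℕ} (g : (Fin n → ℝ) ≃ₗ[ℝ] (Fin n → ℝ)) : Submodule ℝ (Fin n → ℝ) :=
  stableSet g.symm

/-- `g` is pseudohyperbolic for `Q`: it preserves `Q`, and the generalized eigenspace for
eigenvalues of modulus `1` is one-dimensional with eigenvalue `1`; spectrally, `1` is a
simple root of the characteristic polynomial and is its only complex root of modulus `1`. -/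
def IsPseudohyperbolic {n : ℕ} (Q : QuadraticForm ℝ (Fin n → ℝ))
    (g : (Fin n → ℝ) ≃ₗ[ℝ] (Fin n → ℝ)) : Prop :=
  (∀ x, Q (g x) = Q x) ∧
  (((LinearMap.charpoly (g : (Fin n → ℝ) →ₗ[ℝ] (Fin n → ℝ))).map
      (algebraMap ℝ ℂ)).roots.count 1 = 1) ∧
  (∀ z ∈ ((LinearMap.charpoly (g : (Fin n → ℝ) →ₗ[ℝ] (Fin n → ℝ))).map
      (algebraMap ℝ ℂ)).roots, ‖z‖ = 1 → z = 1)

/-!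
An isometry `A` of a nondegenerate bilinear form `B` satisfies `(1 + Aᵀ) B A = B (A + 1)`, so
`det (1 + A) * (det A - 1) = 0`. The polar form of a quadratic form that is positive definite on
`S` and negative definite on a complement `T` is nondegenerate, and `-1` is not an eigenvalue of a
pseudohyperbolic `g`, since `1` is its only eigenvalue of modulus `1`. Hence `det g = 1`.
-/

namespace QuadraticMap

variable {K V : Type*} [Field K] [LinearOrder K] [IsStrictOrderedRing K]
  [AddCommGroup V] [Module K V]

theorem separatingLeft_polarBilin_of_isCompl {Q : QuadraticForm K V} {S T : Submodule K V}
    (hST : IsCompl S T) (hS : ∀ x ∈ S, x ≠ 0 → 0 < Q x) (hT : ∀ x ∈ T, x ≠ 0 → Q x < 0) :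
    (polarBilin Q).SeparatingLeft := by
  intro v hv
  obtain ⟨s, hs, t, ht, rfl⟩ := Submodule.mem_sup.1 (hST.sup_eq_top ▸ Submodule.mem_top (x := v))
  -- `polar Q (s + t) (s - t) = 2 Q s - 2 Q t`
  have hQ : Q s = Q t := by
    have h := hv (s - t)
    simp only [polarBilin_apply_apply, polar_sub_right, polar_add_left, polar_self,
      polar_comm Q t s, nsmul_eq_mul, Nat.cast_ofNat] at h
    linarith
  have hs0 : s = 0 := by
    by_contra h
    by_cases ht0 : t = 0
    · exact (hS s hs h).ne' (hQ.trans (by simp [ht0]))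
    · linarith [hS s hs h, hT t ht ht0]
  have ht0 : t = 0 := by
    by_contra h
    exact (hT t ht h).ne (hQ.symm.trans (by simp [hs0]))
  simp [hs0, ht0]

end QuadraticMap

namespace Matrix

theorem det_eq_one_of_transpose_mul_mul_eq {R n : Type*} [CommRing R] [IsDomain R]
    [Fintype n] [DecidableEq n] {A B : Matrix n n R} (hB : B.det ≠ 0) (hA : Aᵀ * B * A = B)
    (hA1 : (1 + A).det ≠ 0) : A.det = 1 := by
  have key : (1 + Aᵀ) * B * A = B * (A + 1) := by noncomm_ring [hA]
  have hT : (1 + Aᵀ).det = (1 + A).det := by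
    rw [← det_transpose (1 + A), transpose_add, transpose_one]
  have hdet := congrArg det key
  rw [det_mul, det_mul, det_mul, hT, add_comm A] at hdet
  have : (1 + A).det * B.det * (A.det - 1) = 0 := by linear_combination hdet
  simpa [hA1, hB, sub_eq_zero] using this

end Matrix

theorem LinearMap.BilinForm.det_eq_one_of_isometry {K V : Type*} [Field K] [AddCommGroup V]
    [Module K V] [FiniteDimensional K V] {B : LinearMap.BilinForm K V} (hB : B.SeparatingLeft)
    {f : V →ₗ[K] V} (hf : ∀ x y, B (f x) (f y) = B x y)
    (hf1 : ¬ Module.End.HasEigenvalue f (-1)) : LinearMap.det f = 1 := by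
  let b := Module.finBasis K V
  rw [← LinearMap.det_toMatrix b]
  refine Matrix.det_eq_one_of_transpose_mul_mul_eq (B := BilinForm.toMatrix b B) ?_ ?_ ?_
  · rwa [← Matrix.separatingLeft_iff_det_ne_zero, separatingLeft_toMatrix_iff]
  · rw [← BilinForm.toMatrix_comp]
    congr 1
    ext x y
    exact hf x y
  · rw [← LinearMap.toMatrix_one b, ← map_add, LinearMap.det_toMatrix, Ne,
      LinearMap.det_eq_zero_iff_ker_ne_bot, not_not]
    simpa [Module.End.hasEigenvalue_iff, Module.End.eigenspace_def, add_comm] using hf1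

theorem Module.End.HasEigenvalue.algebraMap_mem_roots_charpoly_map {K L V : Type*} [Field K]
    [CommRing L] [IsDomain L] [Algebra K L] [AddCommGroup V] [Module K V] [FiniteDimensional K V]
    {f : Module.End K V} {μ : K} (h : f.HasEigenvalue μ) :
    algebraMap K L μ ∈ (f.charpoly.map (algebraMap K L)).roots := by
  rw [Polynomial.mem_roots_map (LinearMap.charpoly_monic f).ne_zero, Polynomial.eval₂_at_apply,
    (Module.End.hasEigenvalue_iff_isRoot_charpoly f μ).1 h, map_zero]

theorem pseudohyperbolic_det_one_general (d : ℕ)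
    (Q : QuadraticForm ℝ (Fin (2 * d + 1) → ℝ))
    (S T : Submodule ℝ (Fin (2 * d + 1) → ℝ))
    (hST : IsCompl S T)
    (hSpos : ∀ x ∈ S, x ≠ 0 → 0 < Q x)
    (hTneg : ∀ x ∈ T, x ≠ 0 → Q x < 0)
    (g : (Fin (2 * d + 1) → ℝ) ≃ₗ[ℝ] (Fin (2 * d + 1) → ℝ))
    (hg : IsPseudohyperbolic Q g) :
    LinearMap.det (g : (Fin (2 * d + 1) → ℝ) →ₗ[ℝ] (Fin (2 * d + 1) → ℝ)) = 1 := by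
  obtain ⟨hgQ, -, hroots⟩ := hg
  refine LinearMap.BilinForm.det_eq_one_of_isometry
    (QuadraticMap.separatingLeft_polarBilin_of_isCompl hST hSpos hTneg) ?_ ?_
  · intro x y
    simp [QuadraticMap.polar, ← map_add, hgQ]
  · intro h
    have := hroots _ (h.algebraMap_mem_roots_charpoly_map (L := ℂ))
    norm_num at this

/-- Every pseudohyperbolic map `g ∈ O(d+1,d)` has determinant `1`, i.e. lies
in `SO(d+1,d)`. -/
theorem pseudohyperbolic_det_one (d : ℕ) (hd : 0 < d)
    (Q : QuadraticForm ℝ (Fin (2 * d + 1) → ℝ))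
    (S T : Submodule ℝ (Fin (2 * d + 1) → ℝ))
    (hST : IsCompl S T)
    (hSdim : finrank ℝ S = d + 1) (hTdim : finrank ℝ T = d)
    (hSpos : ∀ x ∈ S, x ≠ 0 → 0 < Q x)
    (hTneg : ∀ x ∈ T, x ≠ 0 → Q x < 0)
    (hQdec : ∀ x, Q x = Q ((S.linearProjOfIsCompl T hST x : Fin (2 * d + 1) → ℝ))
        + Q ((T.linearProjOfIsCompl S hST.symm x : Fin (2 * d + 1) → ℝ)))
    (g : (Fin (2 * d + 1) → ℝ) ≃ₗ[ℝ] (Fin (2 * d + 1) → ℝ))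
    (hg : IsPseudohyperbolic Q g) :
    LinearMap.det (g : (Fin (2 * d + 1) → ℝ) →ₗ[ℝ] (Fin (2 * d + 1) → ℝ)) = 1 :=
  pseudohyperbolic_det_one_general d Q S T hST hSpos hTneg g hg
end
end

section
/- Let d be odd. Fix orientations on all maximal totally isotropic subspaces V and on their Q-orthogonal complements V^⊥ such that every f ∈ SO⁺(d+1,d) induces orientation-preserving isomorphisms V → f(V) and V^⊥ → f(V)^⊥. Define the positive wing V^⌐ = { v + x·e : v ∈ V, x ≥ 0 }, where e ∈ V^⊥ is any vector completing a direct basis of V to a direct basis of V^⊥. Then for any two transversal maximal totally isotropic subspaces V₍<₎ and V₍>₎, the positive wings intersect trivially: V₍<₎^⌐ ∩ V₍>₎^⌐ = {0}. -/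
/-!
For transversal maximal totally isotropic `V<` and `V>`, the orthogonal of `V< + V>` contains an
anisotropic vector `e`, and `E = V< ⊕ V> ⊕ ℝe`; let `s = Q e`. For a basis `vᵢ` of `V<` and the
dual family `wᵢ` in `V>`, the `d + 1` vectors `vᵢ + s wᵢ` and `e` are orthogonal of norm `2s`
while the `vᵢ - s wᵢ` are orthogonal to all of them. As `d` is odd they pair up into planes, and
rotating all planes at once by the angle `πt` is a path in `SO⁺` ending at `f = -1` on their
span: `f e = -e` and `f vᵢ = -s wᵢ`, so `f V< = V>`. The functional `ℓ = polar Q e` vanishes on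
`V<` and `V>`, changes sign under `f`, and is nonzero on the normal vector of each wing.
Equivariance `W V> = f '' W V<` then forces `ℓ` to take opposite signs on the two normals, so a
common point `v< + c< e< = v> + c> e>` has `c< = c> = 0` and lies in `V< ⊓ V> = 0`.
-/

open Module Filter Topology

noncomputable section

/-- `f` lies in the identity component `SO⁺(Q)` of the orthogonal group of `Q`: there is a
(pointwise continuous) path of `Q`-preserving automorphisms from the identity to `f`. -/
def InSOplus {n : ℕ} (Q : QuadraticForm ℝ (Fin n → ℝ))
    (f : (Fin n → ℝ) ≃ₗ[ℝ] (Fin n → ℝ)) : Prop :=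
  (∀ x, Q (f x) = Q x) ∧
  ∃ γ : ℝ → ((Fin n → ℝ) ≃ₗ[ℝ] (Fin n → ℝ)),
    (∀ t x, Q (γ t x) = Q x) ∧ γ 0 = LinearEquiv.refl ℝ (Fin n → ℝ) ∧ γ 1 = f ∧
    ∀ x, Continuous fun t => γ t x

open LinearMap (BilinForm)
open QuadraticMap

section Isotropic

variable {E : Type*} [AddCommGroup E] [Module ℝ E] {Q : QuadraticForm ℝ E}

def IsTotallyIsotropic (Q : QuadraticForm ℝ E) (V : Submodule ℝ E) : Prop :=
  ∀ x ∈ V, Q x = 0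

namespace IsTotallyIsotropic

variable {V V' : Submodule ℝ E}

theorem polar_eq_zero (hV : IsTotallyIsotropic Q V) {x y : E} (hx : x ∈ V) (hy : y ∈ V) :
    polar Q x y = 0 := by
  rw [polar, hV _ (add_mem hx hy), hV x hx, hV y hy, sub_zero, sub_zero]

theorem sup_span_singleton (hV : IsTotallyIsotropic Q V) {x : E} (hx : Q x = 0)
    (hxV : x ∈ BilinForm.orthogonal Q.polarBilin V) :
    IsTotallyIsotropic Q (V ⊔ Submodule.span ℝ {x}) := by
  intro u hu
  obtain ⟨y, hy, z, hz, rfl⟩ := Submodule.mem_sup.mp hu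
  obtain ⟨t, rfl⟩ := Submodule.mem_span_singleton.mp hz
  have hexp : Q (y + t • x) = polar Q y (t • x) + Q y + Q (t • x) := by rw [polar]; ring
  have hyx : polar Q y x = 0 := hxV y hy
  rw [hexp, polar_smul_right, hyx, hV y hy, QuadraticMap.map_smul, hx]
  simp

theorem mem_of_mem_orthogonal [FiniteDimensional ℝ E] (hV : IsTotallyIsotropic Q V)
    (hdim : finrank ℝ E ≤ sigPos Q + finrank ℝ V) {x : E} (hx : Q x = 0)
    (hxV : x ∈ BilinForm.orthogonal Q.polarBilin V) : x ∈ V := by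
  by_contra hxV'
  have := QuadraticForm.sigPos_add_finrank_le_of_nonpos
    fun u hu => ((hV.sup_span_singleton hx hxV) u hu).le
  rw [Submodule.finrank_sup_span_singleton hxV'] at this
  omega

theorem disjoint_orthogonal [FiniteDimensional ℝ E] (hV : IsTotallyIsotropic Q V)
    (hV' : IsTotallyIsotropic Q V') (hdim : finrank ℝ E ≤ sigPos Q + finrank ℝ V)
    (hVV' : V ⊓ V' = ⊥) : Disjoint V' (BilinForm.orthogonal Q.polarBilin V) := by
  rw [Submodule.disjoint_def]
  intro x hx hxV
  rw [← Submodule.mem_bot ℝ, ← hVV']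
  exact ⟨hV.mem_of_mem_orthogonal hdim (hV' x hx) hxV, hx⟩

end IsTotallyIsotropic

theorem exists_mem_orthogonal_sup_ne_zero [FiniteDimensional ℝ E] {V V' : Submodule ℝ E}
    (hV : IsTotallyIsotropic Q V) (hV' : IsTotallyIsotropic Q V')
    (hdimV : finrank ℝ E ≤ sigPos Q + finrank ℝ V) (hdimV' : finrank ℝ E ≤ sigPos Q + finrank ℝ V')
    (hVV' : V ⊓ V' = ⊥) (hlt : finrank ℝ V + finrank ℝ V' < finrank ℝ E) :
    ∃ e ∈ BilinForm.orthogonal Q.polarBilin (V ⊔ V'), Q e ≠ 0 := by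
  have hpos : 0 < finrank ℝ (BilinForm.orthogonal Q.polarBilin (V ⊔ V')) := by
    have := BilinForm.finrank_add_finrank_orthogonal' (B := Q.polarBilin) (V ⊔ V')
    have := Submodule.finrank_add_le_finrank_add_finrank V V'
    omega
  obtain ⟨e, he, hne⟩ :=
    Submodule.exists_mem_ne_zero_of_ne_bot fun h => hpos.ne' (Submodule.finrank_eq_zero.mpr h)
  refine ⟨e, he, fun hQe => hne ?_⟩
  have hmem : e ∈ V ⊓ V' :=
    ⟨hV.mem_of_mem_orthogonal hdimV hQe (BilinForm.orthogonal_le le_sup_left he),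
      hV'.mem_of_mem_orthogonal hdimV' hQe (BilinForm.orthogonal_le le_sup_right he)⟩
  rwa [hVV', Submodule.mem_bot] at hmem

theorem sup_sup_span_singleton_eq_top [FiniteDimensional ℝ E] {V V' : Submodule ℝ E} {e : E}
    (hVV' : V ⊓ V' = ⊥) (he : e ∈ BilinForm.orthogonal Q.polarBilin (V ⊔ V')) (hQe : Q e ≠ 0)
    (hdim : finrank ℝ E ≤ finrank ℝ V + finrank ℝ V' + 1) :
    V ⊔ V' ⊔ Submodule.span ℝ {e} = ⊤ := by
  have heV : e ∉ V ⊔ V' := fun h => hQe <| by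
    have : polar Q e e = 0 := he e h
    rw [polar_self, two_smul] at this
    linarith
  have hsup := Submodule.finrank_sup_add_finrank_inf_eq V V'
  have hle := Submodule.finrank_le (V ⊔ V' ⊔ Submodule.span ℝ {e})
  rw [hVV', finrank_bot] at hsup
  apply Submodule.eq_top_of_finrank_eq
  rw [Submodule.finrank_sup_span_singleton heV] at hle ⊢
  omega

theorem polar_ne_zero_of_mem_orthogonal {V V' : Submodule ℝ E} {e y : E}
    (hV : IsTotallyIsotropic Q V) (hperp : Disjoint V' (BilinForm.orthogonal Q.polarBilin V))
    (he : e ∈ BilinForm.orthogonal Q.polarBilin (V ⊔ V')) (hQe : Q e ≠ 0)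
    (htop : V ⊔ V' ⊔ Submodule.span ℝ {e} = ⊤)
    (hy : y ∈ BilinForm.orthogonal Q.polarBilin V) (hyV : y ∉ V) : polar Q e y ≠ 0 := by
  intro hey
  obtain ⟨u, hu, z, hz, rfl⟩ := Submodule.mem_sup.mp (htop ▸ Submodule.mem_top : y ∈ _)
  obtain ⟨a, ha, b, hb, rfl⟩ := Submodule.mem_sup.mp hu
  obtain ⟨t, rfl⟩ := Submodule.mem_span_singleton.mp hz
  have ht : t = 0 := by
    have hae : polar Q a e = 0 := he a (Submodule.mem_sup_left ha)
    have hbe : polar Q b e = 0 := he b (Submodule.mem_sup_right hb)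
    rw [polar_add_right, polar_add_right, polar_comm, hae, polar_comm, hbe, polar_smul_right,
      polar_self, two_smul, zero_add, zero_add, smul_eq_mul] at hey
    rcases mul_eq_zero.mp hey with h | h
    · exact h
    · exact absurd (by linarith) hQe
  subst ht
  have hb0 : b = 0 := by
    refine Submodule.disjoint_def.mp hperp b hb fun x hx => ?_
    have hxy : polar Q x (a + b + (0:ℝ) • e) = 0 := hy x hx
    rwa [zero_smul, add_zero, polar_add_right, hV.polar_eq_zero hx ha, zero_add] at hxy
  exact hyV (by simpa [hb0] using ha)

theorem exists_dual_family [FiniteDimensional ℝ E] {V V' : Submodule ℝ E}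
    {ι : Type*} [Fintype ι] [DecidableEq ι]
    (b : Basis ι ℝ V) (hperp : Disjoint V' (BilinForm.orthogonal Q.polarBilin V))
    (hdim : finrank ℝ V' = finrank ℝ V) :
    ∃ w : ι → E, (∀ j, w j ∈ V') ∧ ∀ i j, polar Q (b i) (w j) = if i = j then 1 else 0 := by
  let ψ : V' →ₗ[ℝ] ι → ℝ := LinearMap.pi fun i => Q.polarBilin (b i) ∘ₗ V'.subtype
  have hinj : Function.Injective ψ := by
    rw [← LinearMap.ker_eq_bot, Submodule.eq_bot_iff]
    intro u hu
    refine Subtype.ext (Submodule.disjoint_def.mp hperp _ u.2 fun y hy => ?_)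
    obtain ⟨c, rfl⟩ := b.mem_submodule_iff'.mp hy
    simp only [map_sum, map_smul, LinearMap.sum_apply, LinearMap.smul_apply]
    refine Finset.sum_eq_zero fun i _ => ?_
    have hbu : polar Q (b i) u = 0 := by simpa [ψ] using congrFun hu i
    simp [hbu]
  have hsurj : Function.Surjective ψ := by
    refine (LinearMap.injective_iff_surjective_of_finrank_eq_finrank ?_).mp hinj
    rw [hdim, finrank_eq_card_basis b, finrank_fintype_fun_eq_card]
  choose u hu using fun j => hsurj (Pi.single j 1)
  exact ⟨fun j => u j, fun j => (u j).2, fun i j => by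
    simpa [ψ, Pi.single_apply, eq_comm] using congrFun (hu j) i⟩

end Isotropic

section Wing

variable {E : Type*} [AddCommGroup E] [Module ℝ E]

def wing (V : Submodule ℝ E) (e : E) : Set E :=
  {y | ∃ v ∈ V, ∃ c : ℝ, 0 ≤ c ∧ y = v + c • e}

theorem wing_inter_wing_eq_zero {V V' : Submodule ℝ E}
    {e e' : E} (ℓ : E →ₗ[ℝ] ℝ) (hV : V ≤ LinearMap.ker ℓ) (hV' : V' ≤ LinearMap.ker ℓ)
    (hVV' : V ⊓ V' = ⊥) (hsign : ℓ e * ℓ e' < 0) : wing V e ∩ wing V' e' = {0} := by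
  ext x
  refine ⟨fun ⟨⟨v, hv, c, hc, hx⟩, ⟨v', hv', c', hc', hx'⟩⟩ => ?_, ?_⟩
  · have hℓ : c * ℓ e = c' * ℓ e' := by
      have := congrArg ℓ (hx.symm.trans hx')
      simpa [LinearMap.mem_ker.mp (hV hv), LinearMap.mem_ker.mp (hV' hv')] using this
    have hc0 : c = 0 := by
      by_contra h
      have hneg := mul_neg_of_pos_of_neg (lt_of_le_of_ne hc (Ne.symm h)) hsign
      have hsq : c * (ℓ e * ℓ e') = c' * ℓ e' ^ 2 := by rw [← mul_assoc, hℓ]; ring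
      nlinarith [mul_nonneg hc' (sq_nonneg (ℓ e'))]
    have hc'0 : c' = 0 := by
      rw [hc0, zero_mul, eq_comm, mul_eq_zero] at hℓ
      exact hℓ.resolve_right (right_ne_zero_of_mul hsign.ne)
    subst hc0 hc'0
    simp only [zero_smul, add_zero] at hx hx'
    have hxVV' : x ∈ V ⊓ V' := ⟨hx ▸ hv, hx' ▸ hv'⟩
    rwa [hVV', Submodule.mem_bot] at hxVV'
  · rintro rfl
    exact ⟨⟨0, V.zero_mem, 0, le_rfl, by simp⟩, ⟨0, V'.zero_mem, 0, le_rfl, by simp⟩⟩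

theorem mul_neg_of_mem_image_wing {V : Submodule ℝ E}
    {e e' : E} {f : E → E} (ℓ : E →ₗ[ℝ] ℝ) (hV : V ≤ LinearMap.ker ℓ)
    (hf : ∀ x, ℓ (f x) = -ℓ x) (he : ℓ e ≠ 0) (he' : ℓ e' ≠ 0) (h : e' ∈ f '' wing V e) :
    ℓ e * ℓ e' < 0 := by
  obtain ⟨_, ⟨v, hv, c, hc, rfl⟩, rfl⟩ := h
  have hℓ : ℓ (f (v + c • e)) = -(c * ℓ e) := by
    simp [hf, LinearMap.mem_ker.mp (hV hv)]
  rw [hℓ] at he' ⊢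
  have hc0 : 0 < c := lt_of_le_of_ne hc (by rintro rfl; simp at he')
  nlinarith [mul_pos hc0 (mul_self_pos.mpr he)]

end Wing

section PlaneRotation

variable {E : Type*} [AddCommGroup E] [Module ℝ E] {Q : QuadraticForm ℝ E}
  {ι : Type*} {G : ι × Fin 2 → E}

variable (Q G) in
def planeCoords : E →ₗ[ℝ] ι → ℂ :=
  LinearMap.pi fun j => Complex.equivRealProdLm.symm.toLinearMap ∘ₗ
    (Q.polarBilin.flip (G (j, 0))).prod (Q.polarBilin.flip (G (j, 1)))

@[simp] theorem planeCoords_apply_re (x : E) (j : ι) :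
    (planeCoords Q G x j).re = polar Q x (G (j, 0)) := rfl

@[simp] theorem planeCoords_apply_im (x : E) (j : ι) :
    (planeCoords Q G x j).im = polar Q x (G (j, 1)) := rfl

theorem planeCoords_eq_zero_iff {x : E} : planeCoords Q G x = 0 ↔ ∀ a, polar Q x (G a) = 0 := by
  simp only [funext_iff, Complex.ext_iff, planeCoords_apply_re, planeCoords_apply_im,
    Pi.zero_apply, Complex.zero_re, Complex.zero_im, Prod.forall, Fin.forall_fin_two]

variable [Fintype ι]

variable (G) in
def planeCombination : (ι → ℂ) →ₗ[ℝ] E :=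
  ∑ j, ((Complex.reLm ∘ₗ LinearMap.proj j).smulRight (G (j, 0)) +
    (Complex.imLm ∘ₗ LinearMap.proj j).smulRight (G (j, 1)))

variable (Q G) in
/-- Identifying `ι → ℂ` with the span of the `G (j, k)` through `planeCombination`, this is
multiplication by `z` on that span and the identity on its orthogonal; `planeCoords` is `κ` times
the inverse identification. -/
def planeRotation (κ : ℝ) (z : ℂ) : E →ₗ[ℝ] E :=
  LinearMap.id + planeCombination G ∘ₗ (((z - 1) / κ) • LinearMap.id) ∘ₗ planeCoords Q G

theorem planeCombination_apply (p : ι → ℂ) :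
    planeCombination G p = ∑ j, ((p j).re • G (j, 0) + (p j).im • G (j, 1)) := by
  simp [planeCombination]

theorem planeRotation_apply (κ : ℝ) (z : ℂ) (x : E) :
    planeRotation Q G κ z x = x + planeCombination G (((z - 1) / κ) • planeCoords Q G x) := rfl

theorem polar_planeCombination (x : E) (p : ι → ℂ) :
    polar Q x (planeCombination G p) =
      ∑ j, ((p j).re * polar Q x (G (j, 0)) + (p j).im * polar Q x (G (j, 1))) := by
  simp only [planeCombination_apply, ← polarBilin_apply_apply, map_sum, map_add, map_smul,
    smul_eq_mul]

theorem polar_planeCombination_eq_zero {x : E} (hx : planeCoords Q G x = 0) (p : ι → ℂ) :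
    polar Q x (planeCombination G p) = 0 := by
  simp [polar_planeCombination, planeCoords_eq_zero_iff.mp hx]

theorem planeRotation_of_planeCoords_eq_zero {κ : ℝ} {x : E} (hx : planeCoords Q G x = 0) (z : ℂ) :
    planeRotation Q G κ z x = x := by
  rw [planeRotation_apply, hx, smul_zero, map_zero, add_zero]

theorem planeRotation_one {κ : ℝ} (x : E) : planeRotation Q G κ 1 x = x := by
  rw [planeRotation_apply, sub_self, zero_div, zero_smul, map_zero, add_zero]

variable [DecidableEq ι] {κ : ℝ}

theorem planeCoords_planeCombination (hG : ∀ a b, polar Q (G a) (G b) = if a = b then κ else 0)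
    (p : ι → ℂ) : planeCoords Q G (planeCombination G p) = (κ : ℂ) • p := by
  funext j
  apply Complex.ext
  · rw [planeCoords_apply_re, polar_comm, polar_planeCombination]
    simp [hG, mul_comm]
  · rw [planeCoords_apply_im, polar_comm, polar_planeCombination]
    simp [hG, mul_comm]

theorem map_planeCombination (hG : ∀ a b, polar Q (G a) (G b) = if a = b then κ else 0)
    (p : ι → ℂ) : Q (planeCombination G p) = κ / 2 * ∑ j, Complex.normSq (p j) := by
  have h := polar_self Q (planeCombination G p)
  rw [polar_planeCombination] at h
  have hre : ∀ j, polar Q (planeCombination G p) (G (j, 0)) = κ * (p j).re := fun j => by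
    rw [← planeCoords_apply_re, planeCoords_planeCombination hG]; simp
  have him : ∀ j, polar Q (planeCombination G p) (G (j, 1)) = κ * (p j).im := fun j => by
    rw [← planeCoords_apply_im, planeCoords_planeCombination hG]; simp
  simp only [hre, him, Complex.normSq_apply, Finset.mul_sum] at h ⊢
  have hsum : ∑ j, ((p j).re * (κ * (p j).re) + (p j).im * (κ * (p j).im))
      = 2 * ∑ j, κ / 2 * ((p j).re * (p j).re + (p j).im * (p j).im) := by
    rw [Finset.mul_sum]
    exact Finset.sum_congr rfl fun j _ => by ring
  rw [two_smul] at h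
  linarith

theorem planeRotation_planeCombination (hκ : κ ≠ 0)
    (hG : ∀ a b, polar Q (G a) (G b) = if a = b then κ else 0) (z : ℂ) (p : ι → ℂ) :
    planeRotation Q G κ z (planeCombination G p) = planeCombination G (z • p) := by
  rw [planeRotation_apply, planeCoords_planeCombination hG, smul_smul,
    div_mul_cancel₀ _ (Complex.ofReal_ne_zero.mpr hκ), ← map_add, sub_smul, one_smul,
    add_sub_cancel]

theorem planeCoords_planeRotation (hκ : κ ≠ 0)
    (hG : ∀ a b, polar Q (G a) (G b) = if a = b then κ else 0) (z : ℂ) (x : E) :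
    planeCoords Q G (planeRotation Q G κ z x) = z • planeCoords Q G x := by
  rw [planeRotation_apply, map_add, planeCoords_planeCombination hG, smul_smul,
    mul_div_cancel₀ _ (Complex.ofReal_ne_zero.mpr hκ), sub_smul, one_smul, add_sub_cancel]

theorem planeRotation_mul (hκ : κ ≠ 0)
    (hG : ∀ a b, polar Q (G a) (G b) = if a = b then κ else 0) (w z : ℂ) (x : E) :
    planeRotation Q G κ w (planeRotation Q G κ z x) = planeRotation Q G κ (w * z) x := by
  rw [planeRotation_apply (z := w), planeCoords_planeRotation hκ hG, planeRotation_apply,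
    planeRotation_apply, add_assoc, ← map_add, smul_smul, ← add_smul]
  congr 3
  field_simp
  ring

theorem map_planeRotation (hκ : κ ≠ 0)
    (hG : ∀ a b, polar Q (G a) (G b) = if a = b then κ else 0) {z : ℂ} (hz : ‖z‖ = 1)
    (x : E) : Q (planeRotation Q G κ z x) = Q x := by
  have hsplit : ∀ y p, planeCoords Q G y = 0 →
      Q (y + planeCombination G p) = Q y + Q (planeCombination G p) := fun y p hy => by
    have := polar_planeCombination_eq_zero hy p
    rw [polar] at this
    linarith
  have key : ∀ y p, planeCoords Q G y = 0 →
      Q (planeRotation Q G κ z (y + planeCombination G p)) = Q (y + planeCombination G p) :=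
    fun y p hy => by
      rw [map_add, planeRotation_of_planeCoords_eq_zero hy, planeRotation_planeCombination hκ hG,
        hsplit y _ hy, hsplit y _ hy, map_planeCombination hG, map_planeCombination hG]
      simp [Complex.normSq_eq_norm_sq, hz]
  set q := ((κ : ℂ)⁻¹) • planeCoords Q G x
  have hy : planeCoords Q G (x - planeCombination G q) = 0 := by
    rw [map_sub, planeCoords_planeCombination hG, smul_smul,
      mul_inv_cancel₀ (Complex.ofReal_ne_zero.mpr hκ), one_smul, sub_self]
  simpa using key _ q hy

theorem exists_planeCombination_eq (a : ι × Fin 2) : ∃ p, planeCombination G p = G a := by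
  obtain ⟨j, k⟩ := a
  have hsingle : ∀ c : ℂ, planeCombination G (Pi.single j c) = c.re • G (j, 0) + c.im • G (j, 1) :=
    fun c => by
      rw [planeCombination_apply, Finset.sum_eq_single j (fun i _ hi => by simp [hi]) (by simp)]
      simp
  fin_cases k
  · exact ⟨Pi.single j 1, by simp [hsingle]⟩
  · exact ⟨Pi.single j Complex.I, by simp [hsingle]⟩

end PlaneRotation

theorem exists_inSOplus_neg_of_orthogonal_planes {n : ℕ} {Q : QuadraticForm ℝ (Fin n → ℝ)}
    {ι : Type*} [Fintype ι] [DecidableEq ι] {G : ι × Fin 2 → Fin n → ℝ} {κ : ℝ} (hκ : κ ≠ 0)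
    (hG : ∀ a b, polar Q (G a) (G b) = if a = b then κ else 0) :
    ∃ f, InSOplus Q f ∧ (∀ a, f (G a) = -G a) ∧ ∀ x, (∀ a, polar Q x (G a) = 0) → f x = x := by
  let u : ℝ → ℂ := fun t => Complex.exp (↑(Real.pi * t) * Complex.I)
  have hu : ∀ t, u t * u (-t) = 1 := fun t => by
    simp only [u, ← Complex.exp_add]
    push_cast
    simp
  have hnorm : ∀ t, ‖u t‖ = 1 := fun t => Complex.norm_exp_ofReal_mul_I _
  let γ : ℝ → (Fin n → ℝ) ≃ₗ[ℝ] (Fin n → ℝ) := fun t =>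
    LinearEquiv.ofLinearMap (planeRotation Q G κ (u t)) (planeRotation Q G κ (u (-t)))
      (LinearMap.ext fun x => by
        simp [planeRotation_mul hκ hG, hu, planeRotation_one])
      (LinearMap.ext fun x => by
        simp [planeRotation_mul hκ hG, mul_comm (u (-t)), hu, planeRotation_one])
  have hu1 : u 1 = -1 := by simp [u, Complex.exp_pi_mul_I]
  refine ⟨γ 1, ⟨fun x => map_planeRotation hκ hG (hnorm 1) x, γ,
    fun t x => map_planeRotation hκ hG (hnorm t) x, ?_, rfl, fun x => ?_⟩, fun a => ?_,
    fun x hx => planeRotation_of_planeCoords_eq_zero (planeCoords_eq_zero_iff.mpr hx) _⟩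
  · ext x : 1
    simp [γ, u, planeRotation_one]
  · have hT := (planeCombination G).continuous_of_finiteDimensional
    simp only [γ, LinearEquiv.coe_ofLinearMap, planeRotation_apply, u]
    fun_prop
  · obtain ⟨p, hp⟩ := exists_planeCombination_eq (G := G) a
    rw [← hp]
    simp [γ, hu1, planeRotation_planeCombination hκ hG]

theorem exists_inSOplus_neg_of_orthogonal {n : ℕ} {Q : QuadraticForm ℝ (Fin n → ℝ)}
    {ι : Type*} [Fintype ι] [DecidableEq ι] {G : ι → Fin n → ℝ} {κ : ℝ} (hκ : κ ≠ 0)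
    (hι : Even (Fintype.card ι)) (hG : ∀ a b, polar Q (G a) (G b) = if a = b then κ else 0) :
    ∃ f, InSOplus Q f ∧ (∀ a, f (G a) = -G a) ∧ ∀ x, (∀ a, polar Q x (G a) = 0) → f x = x := by
  obtain ⟨m, hm⟩ := hι
  let σ : ι ≃ Fin m × Fin 2 :=
    (Fintype.equivFinOfCardEq (hm.trans (Nat.mul_two m).symm)).trans finProdFinEquiv.symm
  obtain ⟨f, hf, hfG, hfix⟩ :=
    exists_inSOplus_neg_of_orthogonal_planes (Q := Q) (G := G ∘ σ.symm) hκ fun a b => by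
      simp [hG, σ.symm.injective.eq_iff]
  exact ⟨f, hf, fun a => by simpa using hfG (σ a), fun x hx => hfix x fun b => hx _⟩

theorem exists_inSOplus_swap_dual_families {n : ℕ} {Q : QuadraticForm ℝ (Fin n → ℝ)}
    {ι : Type*} [Fintype ι] [DecidableEq ι] (hι : Odd (Fintype.card ι)) {v w : ι → Fin n → ℝ}
    {e : Fin n → ℝ} (hv : ∀ i j, polar Q (v i) (v j) = 0) (hw : ∀ i j, polar Q (w i) (w j) = 0)
    (hvw : ∀ i j, polar Q (v i) (w j) = if i = j then 1 else 0)
    (hve : ∀ i, polar Q (v i) e = 0) (hwe : ∀ i, polar Q (w i) e = 0) (hQe : Q e ≠ 0) :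
    ∃ f, InSOplus Q f ∧ f e = -e ∧ ∀ i, f (v i) = -Q e • w i := by
  set s := Q e
  let G : Option ι → Fin n → ℝ := fun a => a.elim e fun i => v i + s • w i
  have hG : ∀ a b, polar Q (G a) (G b) = if a = b then 2 * s else 0 := by
    rintro (_ | i) (_ | j)
    · simp [G, polar_self, s, two_mul]
    · simp [G, polar_comm _ e, hve, hwe]
    · simp [G, polar_add_left, polar_smul_left, hve, hwe]
    · simp only [G, Option.elim_some, polar_add_left, polar_add_right, polar_smul_left,
        polar_smul_right, hv, hw, hvw, polar_comm _ (w _) (v _), Option.some.injEq]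
      rcases eq_or_ne i j with rfl | h
      · simp [two_mul]
      · simp [h, h.symm]
  obtain ⟨f, hf, hfG, hfix⟩ := exists_inSOplus_neg_of_orthogonal (G := G)
    (mul_ne_zero two_ne_zero hQe) (by simpa [Nat.even_add_one] using hι) hG
  refine ⟨f, hf, hfG none, fun i => ?_⟩
  have hP : f (v i - s • w i) = v i - s • w i := hfix _ fun a => by
    rcases a with _ | j
    · simp [G, polar_sub_left, polar_smul_left, hve, hwe]
    · simp only [G, Option.elim_some, polar_sub_left, polar_add_right, polar_smul_left,
        polar_smul_right, hv, hw, hvw, polar_comm _ (w _) (v _)]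
      rcases eq_or_ne i j with rfl | h
      · simp
      · simp [h, h.symm]
  have hg : f (v i + s • w i) = -(v i + s • w i) := hfG (some i)
  have h2 : (2 : ℝ) • f (v i) = (2 : ℝ) • (-s • w i) := by
    rw [← map_smul, show (2 : ℝ) • v i = (v i - s • w i) + (v i + s • w i) by module, map_add,
      hP, hg]
    module
  exact smul_right_injective _ two_ne_zero h2

theorem exists_inSOplus_neg_and_map_eq {n : ℕ} {Q : QuadraticForm ℝ (Fin n → ℝ)}
    {V V' : Submodule ℝ (Fin n → ℝ)} {e : Fin n → ℝ} (hV : IsTotallyIsotropic Q V)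
    (hV' : IsTotallyIsotropic Q V') (hperp : Disjoint V' (BilinForm.orthogonal Q.polarBilin V))
    (hdim : finrank ℝ V' = finrank ℝ V) (hodd : Odd (finrank ℝ V))
    (he : e ∈ BilinForm.orthogonal Q.polarBilin (V ⊔ V')) (hQe : Q e ≠ 0) :
    ∃ f, InSOplus Q f ∧ f e = -e ∧
      V.map (f : (Fin n → ℝ) →ₗ[ℝ] (Fin n → ℝ)) = V' := by
  let b := Module.finBasis ℝ V
  obtain ⟨w, hwV', hvw⟩ := exists_dual_family b hperp hdim
  obtain ⟨f, hf, hfe, hfv⟩ := exists_inSOplus_swap_dual_families (v := fun i => b i) (w := w)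
    (by simpa using hodd) (fun i j => hV.polar_eq_zero (b i).2 (b j).2)
    (fun i j => hV'.polar_eq_zero (hwV' i) (hwV' j)) hvw
    (fun i => he _ (Submodule.mem_sup_left (b i).2))
    (fun i => he _ (Submodule.mem_sup_right (hwV' i))) hQe
  refine ⟨f, hf, hfe, Submodule.eq_of_le_of_finrank_eq ?_ ?_⟩
  · rintro _ ⟨x, hx, rfl⟩
    obtain ⟨c, rfl⟩ := b.mem_submodule_iff'.mp hx
    simp only [LinearEquiv.coe_coe, map_sum, map_smul, hfv]
    exact Submodule.sum_mem _ fun i _ => V'.smul_mem _ (V'.smul_mem _ (hwV' i))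
  · rw [LinearEquiv.finrank_map_eq, hdim]

theorem InSOplus.polar_map {n : ℕ} {Q : QuadraticForm ℝ (Fin n → ℝ)}
    {f : (Fin n → ℝ) ≃ₗ[ℝ] (Fin n → ℝ)} (hf : InSOplus Q f) (x y : Fin n → ℝ) :
    polar Q (f x) (f y) = polar Q x y := by
  simp only [polar, ← map_add, hf.1]

theorem positive_wings_disjoint_odd_general (d : ℕ) (hd : Odd d)
    (Q : QuadraticForm ℝ (Fin (2 * d + 1) → ℝ))
    (S : Submodule ℝ (Fin (2 * d + 1) → ℝ))
    (hSdim : finrank ℝ S = d + 1)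
    (hSpos : ∀ x ∈ S, x ≠ 0 → 0 < Q x)
    (W : Submodule ℝ (Fin (2 * d + 1) → ℝ) → Set (Fin (2 * d + 1) → ℝ))
    (hWform : ∀ V : Submodule ℝ (Fin (2 * d + 1) → ℝ),
      (∀ x ∈ V, Q x = 0) → finrank ℝ V = d →
      ∃ e, e ∈ LinearMap.BilinForm.orthogonal Q.polarBilin V ∧ e ∉ V ∧
        W V = {y | ∃ v ∈ V, ∃ c : ℝ, 0 ≤ c ∧ y = v + c • e})
    (hWequiv : ∀ f : (Fin (2 * d + 1) → ℝ) ≃ₗ[ℝ] (Fin (2 * d + 1) → ℝ), InSOplus Q f →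
      ∀ V : Submodule ℝ (Fin (2 * d + 1) → ℝ), (∀ x ∈ V, Q x = 0) → finrank ℝ V = d →
        W (V.map (f : (Fin (2 * d + 1) → ℝ) →ₗ[ℝ] (Fin (2 * d + 1) → ℝ))) = f '' (W V))
    (Vlt Vgt : Submodule ℝ (Fin (2 * d + 1) → ℝ))
    (hlt : ∀ x ∈ Vlt, Q x = 0) (hltdim : finrank ℝ Vlt = d)
    (hgt : ∀ x ∈ Vgt, Q x = 0) (hgtdim : finrank ℝ Vgt = d)
    (htrans : Vlt ⊓ Vgt = ⊥) :
    W Vlt ∩ W Vgt = {0} := by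
  have hsig : d + 1 ≤ sigPos Q :=
    hSdim ▸ le_sigPos_of_posDef Q fun x hx => hSpos x x.2 (by simpa using hx)
  have hE : finrank ℝ (Fin (2 * d + 1) → ℝ) = 2 * d + 1 := by simp
  have hperp_lt := IsTotallyIsotropic.disjoint_orthogonal hlt hgt (by omega) htrans
  have hperp_gt :=
    IsTotallyIsotropic.disjoint_orthogonal hgt hlt (by omega) (inf_comm Vlt Vgt ▸ htrans)
  obtain ⟨e, he, hQe⟩ := exists_mem_orthogonal_sup_ne_zero hlt hgt (by omega) (by omega) htrans
    (by omega)
  have htop := sup_sup_span_singleton_eq_top htrans he hQe (by omega)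
  obtain ⟨f, hf, hfe, hfV⟩ :=
    exists_inSOplus_neg_and_map_eq hlt hgt hperp_lt (by omega) (by rwa [hltdim]) he hQe
  let ℓ := Q.polarBilin e
  have hℓf : ∀ x, ℓ (f x) = -ℓ x := fun x => by
    simp only [ℓ, polarBilin_apply_apply, ← hf.polar_map e x, hfe, polar_neg_left, neg_neg]
  have hker : Vlt ⊔ Vgt ≤ LinearMap.ker ℓ := fun x hx => by
    rw [LinearMap.mem_ker, polarBilin_apply_apply, polar_comm]
    exact he x hx
  obtain ⟨elt, heltO, heltN, hWlt⟩ := hWform Vlt hlt hltdim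
  obtain ⟨egt, hegtO, hegtN, hWgt⟩ := hWform Vgt hgt hgtdim
  replace hWlt : W Vlt = wing Vlt elt := hWlt
  replace hWgt : W Vgt = wing Vgt egt := hWgt
  have hsign : ℓ elt * ℓ egt < 0 := by
    refine mul_neg_of_mem_image_wing ℓ (le_sup_left.trans hker) hℓf
      (polar_ne_zero_of_mem_orthogonal hlt hperp_lt he hQe htop heltO heltN)
      (polar_ne_zero_of_mem_orthogonal hgt hperp_gt (sup_comm Vlt Vgt ▸ he) hQe
        (by rwa [sup_comm Vgt]) hegtO hegtN) ?_
    rw [← hWlt, ← hWequiv f hf Vlt hlt hltdim, hfV, hWgt]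
    exact ⟨0, Vgt.zero_mem, 1, zero_le_one, by simp⟩
  rw [hWlt, hWgt]
  exact wing_inter_wing_eq_zero ℓ (le_sup_left.trans hker) (le_sup_right.trans hker) htrans hsign

/-- `d` odd.  Given a coherent (SO⁺-equivariant) assignment of positive wings
`W V = { v + c • e : v ∈ V, c ≥ 0 }` (with `e ∈ V^⊥_Q \ V` determined by the chosen
orientations) to all maximal totally isotropic subspaces `V`, the positive wings supported
by any two transversal maximal totally isotropic subspaces intersect trivially. -/
theorem positive_wings_disjoint_odd (d : ℕ) (hd : Odd d)
    (Q : QuadraticForm ℝ (Fin (2 * d + 1) → ℝ))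
    (S T : Submodule ℝ (Fin (2 * d + 1) → ℝ))
    (hST : IsCompl S T)
    (hSdim : finrank ℝ S = d + 1) (hTdim : finrank ℝ T = d)
    (hSpos : ∀ x ∈ S, x ≠ 0 → 0 < Q x)
    (hTneg : ∀ x ∈ T, x ≠ 0 → Q x < 0)
    (hQdec : ∀ x, Q x = Q ((S.linearProjOfIsCompl T hST x : Fin (2 * d + 1) → ℝ))
        + Q ((T.linearProjOfIsCompl S hST.symm x : Fin (2 * d + 1) → ℝ)))
    (W : Submodule ℝ (Fin (2 * d + 1) → ℝ) → Set (Fin (2 * d + 1) → ℝ))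
    (hWform : ∀ V : Submodule ℝ (Fin (2 * d + 1) → ℝ),
      (∀ x ∈ V, Q x = 0) → finrank ℝ V = d →
      ∃ e, e ∈ LinearMap.BilinForm.orthogonal Q.polarBilin V ∧ e ∉ V ∧
        W V = {y | ∃ v ∈ V, ∃ c : ℝ, 0 ≤ c ∧ y = v + c • e})
    (hWequiv : ∀ f : (Fin (2 * d + 1) → ℝ) ≃ₗ[ℝ] (Fin (2 * d + 1) → ℝ), InSOplus Q f →
      ∀ V : Submodule ℝ (Fin (2 * d + 1) → ℝ), (∀ x ∈ V, Q x = 0) → finrank ℝ V = d →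
        W (V.map (f : (Fin (2 * d + 1) → ℝ) →ₗ[ℝ] (Fin (2 * d + 1) → ℝ))) = f '' (W V))
    (Vlt Vgt : Submodule ℝ (Fin (2 * d + 1) → ℝ))
    (hlt : ∀ x ∈ Vlt, Q x = 0) (hltdim : finrank ℝ Vlt = d)
    (hgt : ∀ x ∈ Vgt, Q x = 0) (hgtdim : finrank ℝ Vgt = d)
    (htrans : Vlt ⊓ Vgt = ⊥) :
    W Vlt ∩ W Vgt = {0} :=
  positive_wings_disjoint_odd_general d hd Q S hSdim hSpos W hWform hWequiv Vlt Vgt hlt hltdim hgt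
    hgtdim htrans
end
end

section
/- Let E be a finite-dimensional real vector space with two inner product norms that are C-Lipschitz-equivalent. Then the induced angular distances on the sphere S(E) (α_N(x,y) = arccos(⟨x,y⟩_N / (‖x‖_N ‖y‖_N))) are C²-Lipschitz-equivalent: for all nonzero x, y, α_{N'}(x,y) ≤ C² α_N(x,y). -/
/-!
The angle `∠(x, y)` is the length of the shortest great-circle arc joining `x/‖x‖` to `y/‖y‖`,
so it suffices to control how the identity map `T : (E, B) → (E, B')` distorts short arcs.
Cut the arc from `x` to `y`, of angle `α`, into `n` arcs of angle `α / n`. For the endpoints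
`p, q` of one of them, the distance from `T q` to the line through `T p` is at most `C sin (α / n)`
while `‖T q‖ ≥ 1 / C`, so `sin ∠(T p, T q) ≤ C² sin (α / n)`; moreover `∠(T p, T q)` is acute once
`α / n` is small, so `∠(T p, T q) ≤ arcsin (C² sin (α / n))`. By the triangle inequality for
angles, `∠(T x, T y) ≤ n arcsin (C² sin (α / n))`, and the right side tends to `C² α`.
-/

open Real InnerProductGeometry Filter Topology
open scoped RealInnerProductSpace

theorem HasDerivAt.tendsto_nat_mul_apply_div {f : ℝ → ℝ} {f' : ℝ} (hf : HasDerivAt f f' 0)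
    (hf₀ : f 0 = 0) {a : ℝ} (ha : a ≠ 0) :
    Tendsto (fun n : ℕ => n * f (a / n)) atTop (𝓝 (a * f')) := by
  have hslope := hasDerivAt_iff_tendsto_slope_zero.1 hf
  have hdiv : Tendsto (fun n : ℕ => a / n) atTop (𝓝[≠] 0) :=
    tendsto_nhdsWithin_iff.2 ⟨tendsto_const_div_atTop_nhds_zero_nat a,
      (eventually_ne_atTop 0).mono fun n hn => div_ne_zero ha (Nat.cast_ne_zero.2 hn)⟩
  refine ((hslope.comp hdiv).const_mul a).congr fun n => ?_
  simp only [Function.comp_apply, zero_add, hf₀, sub_zero, smul_eq_mul, inv_div]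
  rcases eq_or_ne (n : ℝ) 0 with hn | hn
  · simp [hn]
  · field_simp

namespace InnerProductGeometry

variable {V W : Type*} [NormedAddCommGroup V] [InnerProductSpace ℝ V]
  [NormedAddCommGroup W] [InnerProductSpace ℝ W]

theorem sq_norm_mul_sq_norm_sub_smul (x y : V) (t : ℝ) :
    ‖x‖ ^ 2 * ‖y - t • x‖ ^ 2 =
      (sin (angle x y) * ‖x‖ * ‖y‖) ^ 2 + (t * ‖x‖ ^ 2 - ⟪x, y⟫) ^ 2 := by
  rw [norm_sub_sq_real, norm_smul, real_inner_smul_right, real_inner_comm, Real.norm_eq_abs,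
    mul_pow, sq_abs]
  linear_combination (-(‖x‖ ^ 2 * ‖y‖ ^ 2)) * sin_sq_add_cos_sq (angle x y) +
    (cos (angle x y) * (‖x‖ * ‖y‖) + ⟪x, y⟫) * cos_angle_mul_norm_mul_norm x y

theorem sin_angle_mul_norm_le_norm_sub_smul (x y : V) (t : ℝ) :
    sin (angle x y) * ‖y‖ ≤ ‖y - t • x‖ := by
  rcases eq_or_ne x 0 with rfl | hx
  · simp
  have h := sq_norm_mul_sq_norm_sub_smul x y t
  have hx' : 0 < ‖x‖ := norm_pos_iff.2 hx
  have hsin := sin_angle_nonneg x y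
  refine (pow_le_pow_iff_left₀ (by positivity) (norm_nonneg _) two_ne_zero).1
    (le_of_mul_le_mul_left ?_ (pow_pos hx' 2))
  nlinarith [sq_nonneg (t * ‖x‖ ^ 2 - ⟪x, y⟫)]

theorem norm_sub_inner_div_smul_eq_sin_angle_mul_norm (x y : V) :
    ‖y - (⟪x, y⟫ / ‖x‖ ^ 2) • x‖ = sin (angle x y) * ‖y‖ := by
  rcases eq_or_ne x 0 with rfl | hx
  · simp
  have h := sq_norm_mul_sq_norm_sub_smul x y (⟪x, y⟫ / ‖x‖ ^ 2)
  have hx' : 0 < ‖x‖ := norm_pos_iff.2 hx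
  rw [div_mul_cancel₀ _ (by positivity), sub_self, zero_pow two_ne_zero, add_zero,
    ← mul_pow, pow_left_inj₀ (by positivity) (by positivity [sin_angle_nonneg x y])
      two_ne_zero] at h
  exact mul_left_cancel₀ hx'.ne' (h.trans (by ring))

variable {T : V →ₗ[ℝ] W} {C : ℝ}

theorem map_ne_zero_of_forall_norm_le (hT : ∀ x, ‖x‖ ≤ C * ‖T x‖) {x : V} (hx : x ≠ 0) :
    T x ≠ 0 :=
  fun h => hx (norm_le_zero_iff.1 (by simpa [h] using hT x))

theorem sin_angle_map_le (hC : 0 < C) (hT : ∀ x, ‖x‖ ≤ C * ‖T x‖)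
    (hT' : ∀ x, ‖T x‖ ≤ C * ‖x‖) (x : V) {y : V} (hy : y ≠ 0) :
    sin (angle (T x) (T y)) ≤ C ^ 2 * sin (angle x y) := by
  set t := ⟪x, y⟫ / ‖x‖ ^ 2
  have hsin := sin_angle_nonneg (T x) (T y)
  refine le_of_mul_le_mul_right ?_ (norm_pos_iff.2 hy)
  calc sin (angle (T x) (T y)) * ‖y‖ ≤ C * (sin (angle (T x) (T y)) * ‖T y‖) := by
        linarith [mul_le_mul_of_nonneg_left (hT y) hsin]
    _ ≤ C * ‖T (y - t • x)‖ := by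
        rw [map_sub, map_smul]
        gcongr
        exact sin_angle_mul_norm_le_norm_sub_smul _ _ _
    _ ≤ C * (C * ‖y - t • x‖) := by gcongr; exact hT' _
    _ = C ^ 2 * sin (angle x y) * ‖y‖ := by
        rw [norm_sub_inner_div_smul_eq_sin_angle_mul_norm]; ring

theorem inner_map_nonneg (hC : 0 < C) (hT : ∀ x, ‖x‖ ≤ C * ‖T x‖)
    (hT' : ∀ x, ‖T x‖ ≤ C * ‖x‖) {p q : V} (hp : ‖p‖ = 1) (hq : ‖q‖ = 1)
    (h : C ^ 4 * (1 - ⟪p, q⟫) ≤ 1) : 0 ≤ ⟪T p, T q⟫ := by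
  have hTp : 1 ≤ C * ‖T p‖ := hp ▸ hT p
  have hTq : 1 ≤ C * ‖T q‖ := hq ▸ hT q
  have hTpq : ‖T p - T q‖ ^ 2 ≤ C ^ 2 * (2 - 2 * ⟪p, q⟫) := by
    have hpq : ‖p - q‖ ^ 2 = 2 - 2 * ⟪p, q⟫ := by rw [norm_sub_sq_real, hp, hq]; ring
    rw [← hpq, ← mul_pow, ← map_sub]
    exact pow_le_pow_left₀ (norm_nonneg _) (hT' _) 2
  have key : 0 ≤ C ^ 2 * ⟪T p, T q⟫ := by
    nlinarith [norm_sub_sq_real (T p) (T q), one_le_pow₀ (n := 2) hTp, one_le_pow₀ (n := 2) hTq]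
  exact (mul_nonneg_iff_of_pos_left (by positivity)).1 key

theorem angle_map_le_arcsin (hC : 0 < C) (hT : ∀ x, ‖x‖ ≤ C * ‖T x‖)
    (hT' : ∀ x, ‖T x‖ ≤ C * ‖x‖) {p q : V} (hp : ‖p‖ = 1) (hq : ‖q‖ = 1)
    (h : C ^ 4 * (1 - cos (angle p q)) ≤ 1) :
    angle (T p) (T q) ≤ arcsin (C ^ 2 * sin (angle p q)) := by
  rw [← inner_eq_cos_angle_of_norm_eq_one hp hq] at h
  have hq0 : q ≠ 0 := norm_ne_zero_iff.1 (hq ▸ one_ne_zero)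
  have hacute : angle (T p) (T q) ≤ π / 2 :=
    arccos_le_pi_div_two.2 (div_nonneg (inner_map_nonneg hC hT hT' hp hq h) (by positivity))
  calc angle (T p) (T q) = arcsin (sin (angle (T p) (T q))) :=
        (arcsin_sin (by linarith [angle_nonneg (T p) (T q), pi_pos]) hacute).symm
    _ ≤ arcsin (C ^ 2 * sin (angle p q)) := monotone_arcsin (sin_angle_map_le hC hT hT' p hq0)

theorem exists_eq_cos_smul_add_sin_smul {u v : V} (hu : ‖u‖ = 1) (hv : ‖v‖ = 1)
    (h : sin (angle u v) ≠ 0) :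
    ∃ w : V, ‖w‖ = 1 ∧ ⟪u, w⟫ = 0 ∧ v = cos (angle u v) • u + sin (angle u v) • w := by
  have huv := inner_eq_cos_angle_of_norm_eq_one hu hv
  have hsin : 0 < sin (angle u v) := (sin_angle_nonneg u v).lt_of_ne' h
  refine ⟨(sin (angle u v))⁻¹ • (v - cos (angle u v) • u), ?_, ?_, ?_⟩
  · have hsq : ‖v - cos (angle u v) • u‖ ^ 2 = sin (angle u v) ^ 2 := by
      rw [norm_sub_sq_real, norm_smul, real_inner_smul_right, real_inner_comm, huv, hu, hv,
        Real.norm_eq_abs, mul_pow, sq_abs]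
      linear_combination -sin_sq_add_cos_sq (angle u v)
    rw [norm_smul, pow_left_inj₀ (norm_nonneg _) hsin.le two_ne_zero |>.1 hsq, norm_inv,
      Real.norm_of_nonneg hsin.le, inv_mul_cancel₀ h]
  · rw [real_inner_smul_right, inner_sub_right, real_inner_smul_right,
      real_inner_self_eq_norm_sq, hu, huv]
    ring
  · rw [smul_inv_smul₀ h, add_sub_cancel]

theorem inner_cos_smul_add_sin_smul {u w : V} (hu : ‖u‖ = 1) (hw : ‖w‖ = 1) (huw : ⟪u, w⟫ = 0)
    (s t : ℝ) : ⟪cos s • u + sin s • w, cos t • u + sin t • w⟫ = cos (s - t) := by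
  simp only [inner_add_left, inner_add_right, real_inner_smul_left, real_inner_smul_right,
    real_inner_self_eq_norm_sq, hu, hw, huw, real_inner_comm u w, cos_sub]
  ring

theorem norm_cos_smul_add_sin_smul {u w : V} (hu : ‖u‖ = 1) (hw : ‖w‖ = 1) (huw : ⟪u, w⟫ = 0)
    (t : ℝ) : ‖cos t • u + sin t • w‖ = 1 := by
  rw [norm_eq_sqrt_real_inner, inner_cos_smul_add_sin_smul hu hw huw, sub_self, cos_zero, sqrt_one]

theorem angle_cos_smul_add_sin_smul {u w : V} (hu : ‖u‖ = 1) (hw : ‖w‖ = 1) (huw : ⟪u, w⟫ = 0)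
    (s : ℝ) {θ : ℝ} (hθ₀ : 0 ≤ θ) (hθπ : θ ≤ π) :
    angle (cos s • u + sin s • w) (cos (s + θ) • u + sin (s + θ) • w) = θ := by
  rw [angle, inner_cos_smul_add_sin_smul hu hw huw, norm_cos_smul_add_sin_smul hu hw huw,
    norm_cos_smul_add_sin_smul hu hw huw, sub_add_cancel_left, cos_neg,
    mul_one, div_one, arccos_cos hθ₀ hθπ]

theorem angle_map_cos_smul_add_sin_smul_le_nat_mul (hC : 0 < C) (hT : ∀ x, ‖x‖ ≤ C * ‖T x‖)
    (hT' : ∀ x, ‖T x‖ ≤ C * ‖x‖) {u w : V} (hu : ‖u‖ = 1) (hw : ‖w‖ = 1) (huw : ⟪u, w⟫ = 0)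
    {α : ℝ} (hα₀ : 0 ≤ α) (hαπ : α ≤ π) {n : ℕ} (hn : n ≠ 0)
    (hsmall : C ^ 4 * (1 - cos (α / n)) ≤ 1) :
    angle (T u) (T (cos α • u + sin α • w)) ≤ n * arcsin (C ^ 2 * sin (α / n)) := by
  set θ := α / n
  set P : ℝ → V := fun t => cos t • u + sin t • w
  have hn' : (1 : ℝ) ≤ n := Nat.one_le_cast.2 (Nat.one_le_iff_ne_zero.2 hn)
  have hθ₀ : 0 ≤ θ := by positivity
  have hθπ : θ ≤ π := (div_le_self hα₀ hn').trans hαπ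
  have hTu : T u ≠ 0 := map_ne_zero_of_forall_norm_le hT (norm_ne_zero_iff.1 (hu ▸ one_ne_zero))
  have hstep (k : ℕ) : angle (T u) (T (P (k * θ))) ≤ k * arcsin (C ^ 2 * sin θ) := by
    induction k with
    | zero => simp [P, angle_self hTu]
    | succ k ih =>
      have hseg : angle (P (k * θ)) (P (k * θ + θ)) = θ :=
        angle_cos_smul_add_sin_smul hu hw huw _ hθ₀ hθπ
      calc angle (T u) (T (P ((k + 1 : ℕ) * θ)))
          ≤ angle (T u) (T (P (k * θ))) + angle (T (P (k * θ))) (T (P (k * θ + θ))) := by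
            rw [Nat.cast_succ, add_one_mul]; exact angle_le_angle_add_angle _ _ _
        _ ≤ k * arcsin (C ^ 2 * sin θ) + arcsin (C ^ 2 * sin θ) := by
            gcongr
            have := angle_map_le_arcsin hC hT hT' (norm_cos_smul_add_sin_smul hu hw huw _)
              (norm_cos_smul_add_sin_smul hu hw huw _) (hseg ▸ hsmall)
            rwa [hseg] at this
        _ = (k + 1 : ℕ) * arcsin (C ^ 2 * sin θ) := by push_cast; ring
  have hnθ : (n : ℝ) * θ = α := mul_div_cancel₀ α (by positivity)
  simpa [P, hnθ] using hstep n

theorem angle_map_cos_smul_add_sin_smul_le (hC : 0 < C) (hT : ∀ x, ‖x‖ ≤ C * ‖T x‖)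
    (hT' : ∀ x, ‖T x‖ ≤ C * ‖x‖) {u w : V} (hu : ‖u‖ = 1) (hw : ‖w‖ = 1) (huw : ⟪u, w⟫ = 0)
    {α : ℝ} (hα₀ : 0 < α) (hαπ : α ≤ π) :
    angle (T u) (T (cos α • u + sin α • w)) ≤ C ^ 2 * α := by
  have hderiv : HasDerivAt (fun t => arcsin (C ^ 2 * sin t)) (C ^ 2) 0 := by
    have h : HasDerivAt (fun t => arcsin (C ^ 2 * sin t))
        (1 / √(1 - (C ^ 2 * sin 0) ^ 2) * (C ^ 2 * cos 0)) 0 :=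
      (hasDerivAt_arcsin (by simp) (by simp)).comp 0 ((hasDerivAt_sin 0).const_mul (C ^ 2))
    simpa using h
  have hlim := hderiv.tendsto_nat_mul_apply_div (by simp) hα₀.ne'
  have hsmall : ∀ᶠ n : ℕ in atTop, C ^ 4 * (1 - cos (α / n)) < 1 := by
    have hcos : Tendsto (fun n : ℕ => C ^ 4 * (1 - cos (α / n))) atTop (𝓝 0) := by
      simpa using (((continuous_cos.tendsto 0).comp
        (tendsto_const_div_atTop_nhds_zero_nat α)).const_sub 1).const_mul (C ^ 4)
    exact hcos.eventually_lt_const one_pos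
  rw [mul_comm]
  refine ge_of_tendsto hlim ?_
  filter_upwards [hsmall, eventually_ne_atTop 0] with n hn hn₀
  exact angle_map_cos_smul_add_sin_smul_le_nat_mul hC hT hT' hu hw huw hα₀.le hαπ hn₀ hn.le

theorem angle_map_le_sq_mul_angle_of_norm_eq_one (hC : 0 < C) (hT : ∀ x, ‖x‖ ≤ C * ‖T x‖)
    (hT' : ∀ x, ‖T x‖ ≤ C * ‖x‖) {u v : V} (hu : ‖u‖ = 1) (hv : ‖v‖ = 1) :
    angle (T u) (T v) ≤ C ^ 2 * angle u v := by
  rcases (angle_nonneg u v).eq_or_lt with h0 | hpos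
  · obtain ⟨hu0, r, hr, hvr⟩ := angle_eq_zero_iff.1 h0.symm
    rw [← h0, mul_zero, hvr, map_smul, angle_smul_right_of_pos _ _ hr,
      angle_self (map_ne_zero_of_forall_norm_le hT hu0)]
  rcases (angle_le_pi u v).eq_or_lt with hπ | hlt
  · have hC1 : 1 ≤ C ^ 2 := by nlinarith [hT u, hT' u]
    rw [hπ]
    exact (angle_le_pi _ _).trans (le_mul_of_one_le_left pi_pos.le hC1)
  obtain ⟨w, hw, huw, hvw⟩ :=
    exists_eq_cos_smul_add_sin_smul hu hv (sin_pos_of_pos_of_lt_pi hpos hlt).ne'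
  conv_lhs => rw [hvw]
  exact angle_map_cos_smul_add_sin_smul_le hC hT hT' hu hw huw hpos hlt.le

theorem angle_map_le_sq_mul_angle (hC : 0 < C) (hT : ∀ x, ‖x‖ ≤ C * ‖T x‖)
    (hT' : ∀ x, ‖T x‖ ≤ C * ‖x‖) {x y : V} (hx : x ≠ 0) (hy : y ≠ 0) :
    angle (T x) (T y) ≤ C ^ 2 * angle x y := by
  have h := angle_map_le_sq_mul_angle_of_norm_eq_one hC hT hT'
    (NormedSpace.norm_normalize_eq_one_iff.2 hx) (NormedSpace.norm_normalize_eq_one_iff.2 hy)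
  rwa [NormedSpace.normalize, NormedSpace.normalize, map_smul, map_smul,
    angle_smul_left_of_pos _ _ (by positivity), angle_smul_right_of_pos _ _ (by positivity),
    angle_smul_left_of_pos _ _ (by positivity), angle_smul_right_of_pos _ _ (by positivity)] at h

end InnerProductGeometry

namespace LinearMap.BilinForm

variable {E : Type*} [AddCommGroup E] [Module ℝ E]

/-- A copy of `E` on which `B` is to be installed as the inner product: distinct forms give
distinct types, so that `E` with `B` and `E` with `B'` can be inner product spaces at once. -/
def InnerSpace (_B : LinearMap.BilinForm ℝ E) : Type _ := E

instance (B : LinearMap.BilinForm ℝ E) : AddCommGroup (InnerSpace B) :=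
  inferInstanceAs (AddCommGroup E)

instance (B : LinearMap.BilinForm ℝ E) : Module ℝ (InnerSpace B) := inferInstanceAs (Module ℝ E)

abbrev innerProductCore (B : LinearMap.BilinForm ℝ E) (hsymm : ∀ x y, B x y = B y x)
    (hpos : ∀ x, x ≠ 0 → 0 < B x x) : InnerProductSpace.Core ℝ (InnerSpace B) where
  inner x y := B x y
  conj_inner_symm x y := hsymm y x
  re_inner_nonneg x := by
    change 0 ≤ B x x
    rcases eq_or_ne x 0 with rfl | hx
    · exact (LinearMap.map_zero₂ B 0).ge
    · exact (hpos x hx).le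
  definite x hx := by_contra fun h => (hpos x h).ne' hx
  add_left := LinearMap.map_add₂ B
  smul_left x y r := LinearMap.map_smul₂ B r x y

end LinearMap.BilinForm

theorem angular_distances_lipschitz_equivalent_general
    (E : Type*) [AddCommGroup E] [Module ℝ E]
    (B B' : LinearMap.BilinForm ℝ E)
    (hBsymm : ∀ x y, B x y = B y x) (hB'symm : ∀ x y, B' x y = B' y x)
    (hBpos : ∀ x : E, x ≠ 0 → 0 < B x x) (hB'pos : ∀ x : E, x ≠ 0 → 0 < B' x x)
    (C : ℝ) (hC : 0 < C)
    (hlip : ∀ x : E, C⁻¹ * Real.sqrt (B x x) ≤ Real.sqrt (B' x x) ∧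
      Real.sqrt (B' x x) ≤ C * Real.sqrt (B x x)) :
    ∀ x y : E, x ≠ 0 → y ≠ 0 →
      Real.arccos (B' x y / (Real.sqrt (B' x x) * Real.sqrt (B' y y)))
        ≤ C ^ 2 * Real.arccos (B x y / (Real.sqrt (B x x) * Real.sqrt (B y y))) := by
  intro x y hx hy
  let cB := LinearMap.BilinForm.innerProductCore B hBsymm hBpos
  let cB' := LinearMap.BilinForm.innerProductCore B' hB'symm hB'pos
  let := cB.toNormedAddCommGroup
  let := InnerProductSpace.ofCore cB.toCore
  let := cB'.toNormedAddCommGroup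
  let := InnerProductSpace.ofCore cB'.toCore
  let T : LinearMap.BilinForm.InnerSpace B →ₗ[ℝ] LinearMap.BilinForm.InnerSpace B' :=
    LinearMap.id
  have hT (z : LinearMap.BilinForm.InnerSpace B) : ‖z‖ ≤ C * ‖T z‖ :=
    (inv_mul_le_iff₀ hC).1 (hlip z).1
  exact angle_map_le_sq_mul_angle hC hT (fun z => (hlip z).2) (x := x) (y := y) hx hy

/-- If two inner-product norms on a finite-dimensional real vector space are
`C`-Lipschitz-equivalent, then the induced angular distances on the sphere are
`C²`-Lipschitz-equivalent. -/
theorem angular_distances_lipschitz_equivalent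
    (E : Type*) [AddCommGroup E] [Module ℝ E] [FiniteDimensional ℝ E]
    (B B' : LinearMap.BilinForm ℝ E)
    (hBsymm : ∀ x y, B x y = B y x) (hB'symm : ∀ x y, B' x y = B' y x)
    (hBpos : ∀ x : E, x ≠ 0 → 0 < B x x) (hB'pos : ∀ x : E, x ≠ 0 → 0 < B' x x)
    (C : ℝ) (hC : 0 < C)
    (hlip : ∀ x : E, C⁻¹ * Real.sqrt (B x x) ≤ Real.sqrt (B' x x) ∧
      Real.sqrt (B' x x) ≤ C * Real.sqrt (B x x)) :
    ∀ x y : E, x ≠ 0 → y ≠ 0 →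
      Real.arccos (B' x y / (Real.sqrt (B' x x) * Real.sqrt (B' y y)))
        ≤ C ^ 2 * Real.arccos (B x y / (Real.sqrt (B x x) * Real.sqrt (B y y))) :=
  angular_distances_lipschitz_equivalent_general E B B' hBsymm hB'symm hBpos hB'pos C hC hlip
end

section
/- Let N be a positive definite quadratic form on R^m and Λ^d N the induced form on Λ^d R^m defined by ⟨x₁∧…∧x_d, y₁∧…∧y_d⟩ = det(⟨x_i,y_j⟩_N). If N and N' are two positive definite forms whose norms are C-Lipschitz-equivalent, then the norms of Λ^d N and Λ^d N' are C^d-Lipschitz-equivalent. -/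
/-!
Diagonalize `N'` simultaneously with `N`: in an `N`-orthonormal basis `(bᵢ)` of `ℝ^m`, `N'` is
diagonal with entries `λᵢ`, and the Lipschitz hypothesis at `bᵢ` gives `C⁻² ≤ λᵢ ≤ C²`.
The Gram-determinant forms are then diagonal in the basis `b_S = ⋀_{i ∈ S} bᵢ` of `Λ^d ℝ^m`,
with entries `1` and `∏_{i ∈ S} λᵢ ∈ [C^{-2d}, C^{2d}]`, so for `z = ∑ c_S b_S` the two norms
are `√(∑ c_S²)` and `√(∑ c_S² ∏_{i ∈ S} λᵢ)`.
-/

noncomputable section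

/-- The decomposable element `x₁ ∧ … ∧ x_d` of the `d`-th exterior power. -/
def wedgeElt (d : ℕ) {E : Type*} [AddCommGroup E] [Module ℝ E] (v : Fin d → E) :
    ⋀[ℝ]^d E :=
  ⟨ExteriorAlgebra.ιMulti ℝ d v,
    ExteriorAlgebra.ιMulti_range ℝ d (Set.mem_range_self v)⟩

open LinearMap (BilinForm)
open Set.powersetCard

namespace LinearMap.BilinForm

lemma exists_basis_toMatrix_eq_one_and_diagonal {E : Type*} [AddCommGroup E] [Module ℝ E]
    [FiniteDimensional ℝ E] (B B' : BilinForm ℝ E) (hBsymm : ∀ x y, B x y = B y x)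
    (hB'symm : ∀ x y, B' x y = B' y x) (hBpos : ∀ x, x ≠ 0 → 0 < B x x) :
    ∃ (b : Module.Basis (Fin (Module.finrank ℝ E)) ℝ E) (lam : Fin (Module.finrank ℝ E) → ℝ),
      toMatrix b B = 1 ∧ toMatrix b B' = Matrix.diagonal lam := by
  let core : InnerProductSpace.Core ℝ E :=
    { inner x y := B x y
      conj_inner_symm x y := hBsymm y x
      re_inner_nonneg x := by
        rcases eq_or_ne x 0 with rfl | hx
        · simp
        · exact (hBpos x hx).le
      add_left x y z := by simp
      smul_left x y r := by simp
      definite x hx := by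
        by_contra h
        exact (hBpos x h).ne' hx }
  let : NormedAddCommGroup E := core.toNormedAddCommGroup
  let : InnerProductSpace ℝ E := InnerProductSpace.ofCore core.toCore
  have : CompleteSpace E := FiniteDimensional.complete ℝ E
  let T : E →ₗ[ℝ] E :=
    { toFun y := (InnerProductSpace.toDual ℝ E).symm (B'.flip y).toContinuousLinearMap
      map_add' y z := by simp
      map_smul' r y := by simp }
  have hT : ∀ x y, (inner ℝ (T y) x : ℝ) = B' x y := fun x y => by
    simp [T, InnerProductSpace.toDual_symm_apply]
  have hTsymm : T.IsSymmetric := fun x y => by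
    rw [hT y x, hB'symm, ← hT x y, real_inner_comm]
  let b := hTsymm.eigenvectorBasis rfl
  refine ⟨b.toBasis, hTsymm.eigenvalues rfl, ?_, ?_⟩
  · ext i j
    rw [toMatrix_apply, OrthonormalBasis.coe_toBasis, Matrix.one_apply]
    exact orthonormal_iff_ite.mp b.orthonormal i j
  · ext i j
    rw [toMatrix_apply, OrthonormalBasis.coe_toBasis, hB'symm, ← hT,
      hTsymm.apply_eigenvectorBasis, real_inner_smul_left, orthonormal_iff_ite.mp b.orthonormal,
      Matrix.diagonal_apply, mul_ite, mul_one, mul_zero]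
    rfl

variable {R M ι : Type*} [CommRing R] [AddCommGroup M] [Module R M] [Fintype ι] [DecidableEq ι]

lemma apply_self_eq_sum_of_toMatrix_eq_diagonal {G : BilinForm R M} {b : Module.Basis ι R M}
    {μ : ι → R} (hG : toMatrix b G = Matrix.diagonal μ) (x : M) :
    G x x = ∑ i, b.repr x i ^ 2 * μ i := by
  rw [apply_eq_dotProduct_toMatrix_mulVec b, hG, dotProduct]
  exact Finset.sum_congr rfl fun i _ => by rw [Matrix.mulVec_diagonal]; ring

variable {I : Type*} [Fintype I] [LinearOrder I]

lemma toMatrix_exteriorPower_basis {d : ℕ} {G : BilinForm R M} {GΛ : BilinForm R (⋀[R]^d M)}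
    (hGΛ : ∀ v w : Fin d → M, GΛ (exteriorPower.ιMulti R d v) (exteriorPower.ιMulti R d w) =
      (Matrix.of fun i j => G (v i) (w j)).det)
    {b : Module.Basis I R M} {μ : I → R} (hG : toMatrix b G = Matrix.diagonal μ) :
    toMatrix (b.exteriorPower d) GΛ =
      Matrix.diagonal fun s : Set.powersetCard I d => ∏ i ∈ s.val, μ i := by
  have hGb : ∀ i j, G (b i) (b j) = if i = j then μ i else 0 := fun i j => by
    rw [← toMatrix_apply b, hG, Matrix.diagonal_apply]
  ext s t
  rw [toMatrix_apply, exteriorPower.basis_apply, exteriorPower.basis_apply,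
    exteriorPower.ιMulti_family, exteriorPower.ιMulti_family, hGΛ, Matrix.diagonal_apply]
  split_ifs with hst
  · subst hst
    set f := ofFinEmbEquiv.symm s
    have hdiag : (Matrix.of fun i j => G ((b ∘ f) i) ((b ∘ f) j)) =
        Matrix.diagonal (μ ∘ f) := by
      ext i j
      simp only [Matrix.of_apply, Function.comp_apply, hGb, f.injective.eq_iff,
        Matrix.diagonal_apply]
    rw [hdiag, Matrix.det_diagonal, ← Finset.prod_coe_sort s.val μ]
    exact Fintype.prod_equiv (s.val.orderIsoOfFin s.prop).toEquiv _ _ fun _ => rfl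
  · obtain ⟨i, his, hit⟩ := (exists_mem_notMem_iff_ne s t).mp hst
    obtain ⟨k, rfl⟩ := (mem_range_ofFinEmbEquiv_symm_iff_mem s i).mpr his
    refine Matrix.det_eq_zero_of_row_eq_zero k fun j => ?_
    rw [Matrix.of_apply, Function.comp_apply, Function.comp_apply, hGb, if_neg]
    rintro heq
    exact hit (heq ▸ Finset.orderEmbOfFin_mem t.val t.prop j)

end LinearMap.BilinForm

lemma sqrt_sum_sq_mul_bounds {ι : Type*} [Fintype ι] (c μ : ι → ℝ) {K : ℝ} (hK : 0 < K)
    (hμ : ∀ i, K⁻¹ ^ 2 ≤ μ i ∧ μ i ≤ K ^ 2) :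
    K⁻¹ * √(∑ i, c i ^ 2) ≤ √(∑ i, c i ^ 2 * μ i) ∧
      √(∑ i, c i ^ 2 * μ i) ≤ K * √(∑ i, c i ^ 2) := by
  have hmul_sqrt : ∀ {L : ℝ}, 0 ≤ L → L * √(∑ i, c i ^ 2) = √(∑ i, L ^ 2 * c i ^ 2) :=
    fun hL => by rw [← Finset.mul_sum, Real.sqrt_mul (sq_nonneg _), Real.sqrt_sq hL]
  rw [hmul_sqrt (inv_nonneg.mpr hK.le), hmul_sqrt hK.le]
  constructor <;> refine Real.sqrt_le_sqrt (Finset.sum_le_sum fun i _ => ?_) <;>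
    rw [mul_comm (c i ^ 2)]
  · exact mul_le_mul_of_nonneg_right (hμ i).1 (sq_nonneg _)
  · exact mul_le_mul_of_nonneg_right (hμ i).2 (sq_nonneg _)

open LinearMap.BilinForm in
theorem exterior_power_norm_lipschitz_general (m d : ℕ)
    (B B' : LinearMap.BilinForm ℝ (Fin m → ℝ))
    (hBsymm : ∀ x y, B x y = B y x) (hB'symm : ∀ x y, B' x y = B' y x)
    (hBpos : ∀ x : Fin m → ℝ, x ≠ 0 → 0 < B x x)
    (C : ℝ) (hC : 0 < C)
    (hlip : ∀ x : Fin m → ℝ, C⁻¹ * Real.sqrt (B x x) ≤ Real.sqrt (B' x x) ∧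
      Real.sqrt (B' x x) ≤ C * Real.sqrt (B x x))
    (BΛ BΛ' : LinearMap.BilinForm ℝ (⋀[ℝ]^d (Fin m → ℝ)))
    (hBΛ : ∀ v w : Fin d → (Fin m → ℝ),
      BΛ (wedgeElt d v) (wedgeElt d w) = Matrix.det (Matrix.of fun i j => B (v i) (w j)))
    (hBΛ' : ∀ v w : Fin d → (Fin m → ℝ),
      BΛ' (wedgeElt d v) (wedgeElt d w) = Matrix.det (Matrix.of fun i j => B' (v i) (w j))) :
    ∀ z : ⋀[ℝ]^d (Fin m → ℝ),
      (C ^ d)⁻¹ * Real.sqrt (BΛ z z) ≤ Real.sqrt (BΛ' z z) ∧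
      Real.sqrt (BΛ' z z) ≤ C ^ d * Real.sqrt (BΛ z z) := by
  intro z
  obtain ⟨b, lam, hB, hB'⟩ := exists_basis_toMatrix_eq_one_and_diagonal B B' hBsymm hB'symm hBpos
  have hlam : ∀ i, C⁻¹ ^ 2 ≤ lam i ∧ lam i ≤ C ^ 2 := fun i => by
    have h := hlip (b i)
    rw [← toMatrix_apply b, ← toMatrix_apply b, hB, hB', Matrix.one_apply_eq,
      Matrix.diagonal_apply_eq, Real.sqrt_one, mul_one, mul_one] at h
    exact ⟨(Real.le_sqrt' (by positivity)).mp h.1, (Real.sqrt_le_iff.mp h.2).2⟩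
  have hprod : ∀ s : Set.powersetCard (Fin _) d,
      (C ^ d)⁻¹ ^ 2 ≤ ∏ i ∈ s.val, lam i ∧ ∏ i ∈ s.val, lam i ≤ (C ^ d) ^ 2 := fun s => by
    have hpow : ∀ x : ℝ, (x ^ d) ^ 2 = ∏ _i ∈ s.val, x ^ 2 := fun x => by
      rw [Finset.prod_const, s.prop, pow_right_comm]
    rw [← inv_pow, hpow, hpow]
    exact ⟨Finset.prod_le_prod (fun _ _ => by positivity) fun i _ => (hlam i).1,
      Finset.prod_le_prod (fun i _ => (sq_nonneg _).trans (hlam i).1) fun i _ => (hlam i).2⟩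
  have hQ := apply_self_eq_sum_of_toMatrix_eq_diagonal
    (toMatrix_exteriorPower_basis hBΛ (hB.trans Matrix.diagonal_one.symm)) z
  have hQ' := apply_self_eq_sum_of_toMatrix_eq_diagonal (toMatrix_exteriorPower_basis hBΛ' hB') z
  simp only [Finset.prod_const_one, mul_one] at hQ
  rw [hQ, hQ']
  exact sqrt_sum_sq_mul_bounds _ _ (pow_pos hC d) hprod

/-- If the norms of two positive definite forms `B`, `B'` on `ℝ^m` are
`C`-Lipschitz-equivalent, then the norms of the induced Gram-determinant forms on the
`d`-th exterior power are `C^d`-Lipschitz-equivalent. -/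
theorem exterior_power_norm_lipschitz (m d : ℕ)
    (B B' : LinearMap.BilinForm ℝ (Fin m → ℝ))
    (hBsymm : ∀ x y, B x y = B y x) (hB'symm : ∀ x y, B' x y = B' y x)
    (hBpos : ∀ x : Fin m → ℝ, x ≠ 0 → 0 < B x x)
    (hB'pos : ∀ x : Fin m → ℝ, x ≠ 0 → 0 < B' x x)
    (C : ℝ) (hC : 0 < C)
    (hlip : ∀ x : Fin m → ℝ, C⁻¹ * Real.sqrt (B x x) ≤ Real.sqrt (B' x x) ∧
      Real.sqrt (B' x x) ≤ C * Real.sqrt (B x x))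
    (BΛ BΛ' : LinearMap.BilinForm ℝ (⋀[ℝ]^d (Fin m → ℝ)))
    (hBΛ : ∀ v w : Fin d → (Fin m → ℝ),
      BΛ (wedgeElt d v) (wedgeElt d w) = Matrix.det (Matrix.of fun i j => B (v i) (w j)))
    (hBΛ' : ∀ v w : Fin d → (Fin m → ℝ),
      BΛ' (wedgeElt d v) (wedgeElt d w) = Matrix.det (Matrix.of fun i j => B' (v i) (w j))) :
    ∀ z : ⋀[ℝ]^d (Fin m → ℝ),
      (C ^ d)⁻¹ * Real.sqrt (BΛ z z) ≤ Real.sqrt (BΛ' z z) ∧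
      Real.sqrt (BΛ' z z) ≤ C ^ d * Real.sqrt (BΛ z z) :=
  exterior_power_norm_lipschitz_general m d B B' hBsymm hB'symm hBpos C hC hlip BΛ BΛ' hBΛ hBΛ'
end
end

section
/- For every θ ∈ [0, π/2] and every positive integer d, arccos((cos θ)^d) ≤ √d · θ. -/
/-!
Write `g x = arccos (cos x ^ d)`, so that `g 0 = 0`. By the mean value theorem it suffices to bound
`g' = d cos^(d-1) x sin x / √(1 - cos^(2d) x)` by `√d` on `(0, π/2)`. Squared and with `u = cos² x`,
this is `d u^(d-1) (1 - u) ≤ 1 - u^d`, which holds because `1 - u^d = (1 - u) ∑_{i<d} u^i` and each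
of the `d` terms `u^i` is at least `u^(d-1)`.
-/

open Real Set

theorem natCast_mul_pow_pred_mul_one_sub_le {R : Type*} [CommRing R] [PartialOrder R]
    [IsOrderedRing R] {u : R} (h0 : 0 ≤ u) (h1 : u ≤ 1) (d : ℕ) :
    d * u ^ (d - 1) * (1 - u) ≤ 1 - u ^ d := by
  have hsum : (d : R) * u ^ (d - 1) ≤ ∑ i ∈ Finset.range d, u ^ i :=
    calc (d : R) * u ^ (d - 1) = ∑ _ ∈ Finset.range d, u ^ (d - 1) := by simp
      _ ≤ ∑ i ∈ Finset.range d, u ^ i := Finset.sum_le_sum fun i hi =>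
          pow_le_pow_of_le_one h0 h1 (Nat.le_pred_of_lt (Finset.mem_range.1 hi))
  rw [← geom_sum_mul_neg]
  exact mul_le_mul_of_nonneg_right hsum (sub_nonneg.2 h1)

theorem natCast_mul_pow_pred_mul_sqrt_one_sub_sq_le {c : ℝ} (h0 : 0 ≤ c) (h1 : c ≤ 1) (d : ℕ) :
    d * c ^ (d - 1) * √(1 - c ^ 2) ≤ √d * √(1 - (c ^ d) ^ 2) := by
  have hc2 : 0 ≤ 1 - c ^ 2 := by nlinarith
  have hcd : 0 ≤ 1 - (c ^ d) ^ 2 := by nlinarith [pow_le_one₀ h0 h1 (n := d), pow_nonneg h0 d]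
  rw [← sqrt_mul d.cast_nonneg, le_sqrt (by positivity) (mul_nonneg d.cast_nonneg hcd)]
  calc ((d : ℝ) * c ^ (d - 1) * √(1 - c ^ 2)) ^ 2
      = d * (d * (c ^ 2) ^ (d - 1) * (1 - c ^ 2)) := by rw [mul_pow, sq_sqrt hc2]; ring
    _ ≤ d * (1 - (c ^ 2) ^ d) := by
      gcongr
      exact natCast_mul_pow_pred_mul_one_sub_le (sq_nonneg c) (by nlinarith) d
    _ = d * (1 - (c ^ d) ^ 2) := by ring

theorem hasDerivAt_arccos_cos_pow {d : ℕ} {x : ℝ} (h₁ : cos x ^ d ≠ -1) (h₂ : cos x ^ d ≠ 1) :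
    HasDerivAt (fun x => arccos (cos x ^ d))
      (d * cos x ^ (d - 1) * sin x / √(1 - (cos x ^ d) ^ 2)) x := by
  have h := (hasDerivAt_arccos h₁ h₂).comp x ((hasDerivAt_cos x).fun_pow d)
  exact h.congr_deriv (by ring)

theorem cos_pow_mem_Ioo {d : ℕ} (hd : d ≠ 0) {x : ℝ} (hx : x ∈ Ioo 0 (π / 2)) :
    cos x ^ d ∈ Ioo 0 1 := by
  have hcos₀ : 0 < cos x := cos_pos_of_mem_Ioo ⟨by linarith [hx.1, pi_pos], hx.2⟩
  have hcos₁ : cos x < 1 := by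
    simpa using cos_lt_cos_of_nonneg_of_le_pi le_rfl (by linarith [hx.2, pi_pos]) hx.1
  exact ⟨pow_pos hcos₀ d, pow_lt_one₀ hcos₀.le hcos₁ hd⟩

theorem differentiableOn_arccos_cos_pow {d : ℕ} (hd : d ≠ 0) :
    DifferentiableOn ℝ (fun x => arccos (cos x ^ d)) (Ioo 0 (π / 2)) := fun x hx =>
  have hpow := cos_pow_mem_Ioo hd hx
  (hasDerivAt_arccos_cos_pow (by linarith [hpow.1]) hpow.2.ne).differentiableAt.differentiableWithinAt

theorem deriv_arccos_cos_pow_le {d : ℕ} (hd : d ≠ 0) {x : ℝ} (hx : x ∈ Ioo 0 (π / 2)) :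
    deriv (fun x => arccos (cos x ^ d)) x ≤ √d := by
  obtain ⟨hpow₀, hpow₁⟩ := cos_pow_mem_Ioo hd hx
  have hden : 0 < √(1 - (cos x ^ d) ^ 2) := sqrt_pos.2 (by nlinarith)
  rw [(hasDerivAt_arccos_cos_pow (by linarith) hpow₁.ne).deriv, div_le_iff₀ hden,
    sin_eq_sqrt_one_sub_cos_sq hx.1.le (by linarith [hx.2, pi_pos])]
  exact natCast_mul_pow_pred_mul_sqrt_one_sub_sq_le
    (cos_nonneg_of_mem_Icc ⟨by linarith [hx.1, pi_pos], hx.2.le⟩) (cos_le_one x) d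

/-- For every `θ ∈ [0, π/2]` and every positive integer `d`,
`arccos ((cos θ)^d) ≤ √d · θ`. -/
theorem arccos_cos_pow_le (θ : ℝ) (h0 : 0 ≤ θ) (h1 : θ ≤ π / 2) (d : ℕ) (hd : 0 < d) :
    Real.arccos (Real.cos θ ^ d) ≤ Real.sqrt d * θ := by
  have hmvt : arccos (cos θ ^ d) - arccos (cos 0 ^ d) ≤ √d * (θ - 0) := by
    refine (convex_Icc 0 (π / 2)).image_sub_le_mul_sub_of_deriv_le
      (f := fun x => arccos (cos x ^ d)) (by fun_prop) ?_ ?_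
      0 ⟨le_rfl, by positivity⟩ θ ⟨h0, h1⟩ h0 <;> rw [interior_Icc]
    · exact differentiableOn_arccos_cos_pow hd.ne'
    · exact fun x hx => deriv_arccos_cos_pow_le hd.ne' hx
  simpa using hmvt
end
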